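/- arXiv:2407.11374 — 3 statements merged into one kernel-verified Lean document; each statement's English description precedes it below -/
import Mathlib

section
/- Let A ⊕ B = ℤ_M be a tiling, and p, q two distinct primes dividing M with p^{n_p} ‖ M, q^{n_q} ‖ M. Let Λ = Λ(z, M/(pq)) = {z' ∈ ℤ_M : (M/(pq)) | z − z'} for some z ∈ ℤ_M, and let a ∈ A, b ∈ B satisfy a + b = z. Then there exists ν ∈ {p, q} such that every element of Σ_A(Λ) is congruent to a modulo ν^{n_ν − 1} and every element of Σ_B(Λ) is congruent to b modulo ν^{n_ν − 1} (divisibility of differences by ν^{n_ν − 1} in ℤ_M). -/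
/-- `A ⊕ B = ℤ_M`: every element of `ZMod M` has a unique representation `a + b`
with `a ∈ A`, `b ∈ B`. -/
def IsTiling (M : ℕ) (A B : Finset (ZMod M)) : Prop :=
  ∀ z : ZMod M, ∃! ab : ZMod M × ZMod M, ab.1 ∈ A ∧ ab.2 ∈ B ∧ ab.1 + ab.2 = z

/-- The fiber `x * F_p = {x + ν·(M/p) : 0 ≤ ν < p}` in the `p` direction. -/
def fiberSet (M p : ℕ) (x : ZMod M) : Set (ZMod M) :=
  {z | ∃ ν < p, z = x + ((ν * (M / p) : ℕ) : ZMod M)}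

/-- `Σ_A(Z)`: the elements of `A` used in representations of elements of `Z`
in the tiling `A ⊕ B`. -/
def SigmaSet (M : ℕ) (A B : Finset (ZMod M)) (Z : Set (ZMod M)) : Set (ZMod M) :=
  {a | a ∈ A ∧ ∃ b ∈ B, a + b ∈ Z}

/-- `Z` splits with parity `(A, B)`: `p^n` divides all differences of elements of
`Σ_A(Z)`, and `p^{n-1}` exactly divides differences of distinct elements of `Σ_B(Z)`
(divisibility of differences measured on canonical representatives in `ZMod M`). -/
def SplitsParity (M p n : ℕ) (A B : Finset (ZMod M)) (Z : Set (ZMod M)) : Prop :=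
  (∀ a ∈ SigmaSet M A B Z, ∀ a' ∈ SigmaSet M A B Z, (p ^ n : ℕ) ∣ ((a - a' : ZMod M)).val) ∧
  (∀ b ∈ SigmaSet M B A Z, ∀ b' ∈ SigmaSet M B A Z, b ≠ b' →
    (p ^ (n - 1) : ℕ) ∣ ((b - b' : ZMod M)).val ∧ ¬ (p ^ n : ℕ) ∣ ((b - b' : ZMod M)).val)

open Finset in
/-- Counting: a (dilated) tiling has `|A| * |B| = M`. -/
lemma tiling_aux_card {M : ℕ} [NeZero M] {A B : Finset (ZMod M)} {k : ZMod M}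
    (h : ∀ x : ZMod M, ∃! ab : ZMod M × ZMod M, ab.1 ∈ A ∧ ab.2 ∈ B ∧ k * ab.1 + ab.2 = x) :
    (A ×ˢ B).card = M := by
  have hcb : (A ×ˢ B).card = (Finset.univ : Finset (ZMod M)).card := by
    apply Finset.card_bij (fun ab _ => k * ab.1 + ab.2)
    · intro a ha; exact Finset.mem_univ _
    · intro u hu v hv huv
      rcases Finset.mem_product.mp hu with ⟨hu1, hu2⟩
      rcases Finset.mem_product.mp hv with ⟨hv1, hv2⟩
      obtain ⟨w, _, hw⟩ := h (k * u.1 + u.2)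
      have e1 := hw u ⟨hu1, hu2, rfl⟩
      have e2 := hw v ⟨hv1, hv2, huv.symm⟩
      rw [e1, e2]
    · intro x _
      obtain ⟨ab, ⟨h1, h2, h3⟩, -⟩ := h x
      exact ⟨ab, Finset.mem_product.mpr ⟨h1, h2⟩, h3⟩
  rw [hcb, Finset.card_univ, ZMod.card]

open Finset AddMonoidAlgebra in
/-- Frobenius step: dilating the `A`-side of a tiling by a prime `r` not dividing `M`
preserves the tiling property. -/
lemma dilate_step {M : ℕ} [NeZero M] {A B : Finset (ZMod M)} {r k : ℕ} (hr : r.Prime)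
    (hrM : ¬ r ∣ M)
    (h : ∀ x : ZMod M, ∃! ab : ZMod M × ZMod M,
        ab.1 ∈ A ∧ ab.2 ∈ B ∧ (k : ZMod M) * ab.1 + ab.2 = x) :
    ∀ x : ZMod M, ∃! ab : ZMod M × ZMod M,
        ab.1 ∈ A ∧ ab.2 ∈ B ∧ ((r * k : ℕ) : ZMod M) * ab.1 + ab.2 = x := by
  haveI : Fact r.Prime := ⟨hr⟩
  set R := AddMonoidAlgebra (ZMod r) (ZMod M) with hR
  haveI : CharP R r := ⟨fun n => by
    rw [AddMonoidAlgebra.natCast_def, AddMonoidAlgebra.single_eq_zero,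
      ZMod.natCast_eq_zero_iff]⟩
  set S : R := ∑ a ∈ A, AddMonoidAlgebra.single ((k : ZMod M) * a) (1 : ZMod r) with hS
  set T : R := ∑ b ∈ B, AddMonoidAlgebra.single b (1 : ZMod r) with hT
  set U : R := ∑ x : ZMod M, AddMonoidAlgebra.single x (1 : ZMod r) with hU
  -- expansion of a product of sums of singles over a "tiling-like" family
  have expand : ∀ c : ZMod M,
      (∑ a ∈ A, AddMonoidAlgebra.single (c * a) (1 : ZMod r)) * T
        = ∑ ab ∈ A ×ˢ B, AddMonoidAlgebra.single (c * ab.1 + ab.2) (1 : ZMod r) := by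
    intro c
    rw [Finset.sum_mul_sum, Finset.sum_product]
    simp only [AddMonoidAlgebra.single_mul_single, one_mul]
  have key1 : S * T = U := by
    rw [hS, expand k, hU]
    apply Finset.sum_bij (fun ab _ => (k : ZMod M) * ab.1 + ab.2)
    · intro a ha; exact Finset.mem_univ _
    · intro u hu v hv huv
      rcases Finset.mem_product.mp hu with ⟨hu1, hu2⟩
      rcases Finset.mem_product.mp hv with ⟨hv1, hv2⟩
      obtain ⟨w, _, hw⟩ := h ((k : ZMod M) * u.1 + u.2)
      have e1 := hw u ⟨hu1, hu2, rfl⟩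
      have e2 := hw v ⟨hv1, hv2, huv.symm⟩
      rw [e1, e2]
    · intro x _
      obtain ⟨ab, ⟨h1, h2, h3⟩, -⟩ := h x
      exact ⟨ab, Finset.mem_product.mpr ⟨h1, h2⟩, h3⟩
    · intro ab _; rfl
  have hcardM : (A ×ˢ B).card = M := tiling_aux_card h
  have hrA : ¬ r ∣ A.card := by
    intro hdvd
    exact hrM (hdvd.trans ⟨B.card, by rw [← Finset.card_product, hcardM]⟩)
  -- single y 1 * U = U
  have singU : ∀ y : ZMod M, AddMonoidAlgebra.single y (1 : ZMod r) * U = U := by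
    intro y
    rw [hU, Finset.mul_sum]
    simp only [AddMonoidAlgebra.single_mul_single, one_mul]
    exact Fintype.sum_equiv (Equiv.addLeft y) _ _ (fun x => rfl)
  have SU : S * U = (A.card : R) * U := by
    rw [hS, Finset.sum_mul]
    simp only [singU]
    rw [Finset.sum_const, nsmul_eq_mul]
  have SnU : ∀ n : ℕ, S ^ n * U = (A.card : R) ^ n * U := by
    intro n
    induction n with
    | zero => simp
    | succ n ihn =>
      calc S ^ (n + 1) * U = S ^ n * (S * U) := by ring
        _ = S ^ n * ((A.card : R) * U) := by rw [SU]
        _ = (A.card : R) * (S ^ n * U) := by ring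
        _ = (A.card : R) * ((A.card : R) ^ n * U) := by rw [ihn]
        _ = (A.card : R) ^ (n + 1) * U := by ring
  have fermat : (A.card : R) ^ (r - 1) = 1 := by
    have h0 : ((A.card : ZMod r)) ≠ 0 := by
      rw [Ne, ZMod.natCast_eq_zero_iff]; exact hrA
    have hfer : ((A.card : ZMod r)) ^ (r - 1) = 1 := ZMod.pow_card_sub_one_eq_one h0
    have hcast : (A.card : R) = AddMonoidAlgebra.single (0 : ZMod M) ((A.card : ZMod r)) :=
      AddMonoidAlgebra.natCast_def _
    rw [hcast, AddMonoidAlgebra.single_pow, smul_zero, hfer]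
    rfl
  have key2 : S ^ r * T = U := by
    have : S ^ r * T = S ^ (r - 1) * (S * T) := by
      rw [← mul_assoc, ← pow_succ, Nat.sub_add_cancel hr.one_lt.le]
    rw [this, key1, SnU, fermat, one_mul]
  have key3 : S ^ r = ∑ a ∈ A, AddMonoidAlgebra.single (((r * k : ℕ) : ZMod M) * a) (1 : ZMod r) := by
    rw [hS, sum_pow_char]
    apply Finset.sum_congr rfl
    intro a _
    rw [AddMonoidAlgebra.single_pow, one_pow, nsmul_eq_mul]
    congr 1
    push_cast
    ring
  have key4 : (∑ ab ∈ A ×ˢ B,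
      AddMonoidAlgebra.single (((r * k : ℕ) : ZMod M) * ab.1 + ab.2) (1 : ZMod r)) = U := by
    rw [← expand ((r * k : ℕ) : ZMod M), ← key3, key2]
  -- coefficient extraction
  have coeff : ∀ x : ZMod M,
      (((A ×ˢ B).filter (fun ab => ((r * k : ℕ) : ZMod M) * ab.1 + ab.2 = x)).card : ZMod r)
        = 1 := by
    intro x
    have h1 := congrArg (fun F : R => F.coeff x) key4
    rw [AddMonoidAlgebra.coeff_sum, AddMonoidAlgebra.coeff_sum] at h1
    rw [Finset.sum_apply', Finset.sum_apply'] at h1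
    simp only [AddMonoidAlgebra.coeff_single, Finsupp.single_apply] at h1
    rw [Finset.sum_ite_eq' Finset.univ x (fun _ => (1 : ZMod r))] at h1
    simp only [Finset.mem_univ, if_true] at h1
    rw [Finset.sum_boole] at h1
    exact h1
  have hne : ∀ x : ZMod M,
      1 ≤ ((A ×ˢ B).filter (fun ab => ((r * k : ℕ) : ZMod M) * ab.1 + ab.2 = x)).card := by
    intro x
    rcases Nat.eq_zero_or_pos (((A ×ˢ B).filter
      (fun ab => ((r * k : ℕ) : ZMod M) * ab.1 + ab.2 = x)).card) with h0 | h1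
    · exfalso
      have := coeff x
      rw [h0] at this
      simp only [Nat.cast_zero] at this
      exact zero_ne_one this
    · exact h1
  have hsum : ∑ x : ZMod M,
      ((A ×ˢ B).filter (fun ab => ((r * k : ℕ) : ZMod M) * ab.1 + ab.2 = x)).card = M := by
    have hfib := Finset.card_eq_sum_card_fiberwise
      (f := fun ab : ZMod M × ZMod M => ((r * k : ℕ) : ZMod M) * ab.1 + ab.2)
      (s := A ×ˢ B) (t := Finset.univ) (fun a _ => Finset.mem_univ _)
    exact hfib.symm.trans hcardM
  have hone : ∀ x : ZMod M,
      ((A ×ˢ B).filter (fun ab => ((r * k : ℕ) : ZMod M) * ab.1 + ab.2 = x)).card = 1 := by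
    have htot : (∑ x : ZMod M, ((A ×ˢ B).filter
        (fun ab => ((r * k : ℕ) : ZMod M) * ab.1 + ab.2 = x)).card)
        = ∑ _x : ZMod M, 1 := by
      rw [hsum, Finset.sum_const, Finset.card_univ, ZMod.card, smul_eq_mul, mul_one]
    have := (Finset.sum_eq_sum_iff_of_le (fun i _ => hne i)).mp htot.symm
    intro x
    exact ((this x (Finset.mem_univ x))).symm
  intro x
  obtain ⟨e, he⟩ := Finset.card_eq_one.mp (hone x)
  have hem : e ∈ (A ×ˢ B).filter (fun ab => ((r * k : ℕ) : ZMod M) * ab.1 + ab.2 = x) := by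
    rw [he]; exact Finset.mem_singleton_self e
  rw [Finset.mem_filter, Finset.mem_product] at hem
  refine ⟨e, ⟨hem.1.1, hem.1.2, hem.2⟩, ?_⟩
  intro y hy
  have : y ∈ (A ×ˢ B).filter (fun ab => ((r * k : ℕ) : ZMod M) * ab.1 + ab.2 = x) := by
    rw [Finset.mem_filter, Finset.mem_product]
    exact ⟨⟨hy.1, hy.2.1⟩, hy.2.2⟩
  rw [he] at this
  exact Finset.mem_singleton.mp this

/-- Tijdeman-style dilation: if `gcd(k, M) = 1` then `kA ⊕ B` is also a tiling. -/
lemma dilate {M : ℕ} [NeZero M] {A B : Finset (ZMod M)} (h : IsTiling M A B) :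
    ∀ k : ℕ, Nat.Coprime k M →
      ∀ x : ZMod M, ∃! ab : ZMod M × ZMod M,
        ab.1 ∈ A ∧ ab.2 ∈ B ∧ (k : ZMod M) * ab.1 + ab.2 = x := by
  intro k
  induction k using Nat.strong_induction_on with
  | _ k ih =>
    intro hk x
    rcases eq_or_ne k 0 with rfl | hk0
    · have hM1 : M = 1 := (Nat.coprime_zero_left M).mp hk
      subst hM1
      obtain ⟨ab, ⟨h1, h2, _⟩, hu⟩ := h x
      exact ⟨ab, ⟨h1, h2, Subsingleton.elim _ _⟩,
        fun y hy => hu y ⟨hy.1, hy.2.1, Subsingleton.elim _ _⟩⟩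
    rcases eq_or_ne k 1 with rfl | hk1
    · simpa using h x
    · obtain ⟨r, hr, k', rfl⟩ : ∃ r, r.Prime ∧ ∃ k', k = r * k' := by
        obtain ⟨r, hr, hrd⟩ := Nat.exists_prime_and_dvd hk1
        exact ⟨r, hr, hrd⟩
      have hrM : ¬ r ∣ M := by
        intro hdvd
        have hdg : r ∣ Nat.gcd (r * k') M := Nat.dvd_gcd (Dvd.intro k' rfl) hdvd
        rw [Nat.Coprime] at hk
        rw [hk] at hdg
        exact hr.not_dvd_one hdg
      have hk' : Nat.Coprime k' M := Nat.Coprime.coprime_dvd_left (Dvd.intro_left r rfl) hk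
      have hk'0 : k' ≠ 0 := by
        intro h0; exact hk0 (by rw [h0, mul_zero])
      have hlt : k' < r * k' := by
        have : 1 * k' < r * k' :=
          Nat.mul_lt_mul_of_lt_of_le hr.one_lt (le_refl k') (Nat.pos_of_ne_zero hk'0)
        simpa using this
      exact dilate_step hr hrM (fun y => ih k' hlt hk' y) x

lemma val_dvd_iff {M d : ℕ} [NeZero M] (hd : d ∣ M) (x : ZMod M) :
    d ∣ x.val ↔ (ZMod.castHom hd (ZMod d) x) = 0 := by
  rw [ZMod.castHom_apply, ← ZMod.natCast_val, ZMod.natCast_eq_zero_iff]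

/-- The key "per-pair" dichotomy, proven by a dilation/collision argument. -/
lemma perpair {M p q np' nq' W : ℕ} [NeZero M] (hp : p.Prime) (hq : q.Prime) (hpq : p ≠ q)
    (hM : M = p * q * (p ^ np' * q ^ nq' * W))
    {A B : Finset (ZMod M)} (h : IsTiling M A B)
    {x₁ y₁ x₂ y₂ : ZMod M} (hx₁ : x₁ ∈ A) (hy₁ : y₁ ∈ B) (hx₂ : x₂ ∈ A) (hy₂ : y₂ ∈ B)
    (hzz : (p ^ np' * q ^ nq' * W : ℕ) ∣ ((x₂ + y₂) - (x₁ + y₁) : ZMod M).val) :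
    p ^ np' ∣ (x₁ - x₂ : ZMod M).val ∨ q ^ nq' ∣ (x₁ - x₂ : ZMod M).val := by
  by_contra hcon
  push_neg at hcon
  obtain ⟨hcp, hcq⟩ := hcon
  set g := (x₁ - x₂ : ZMod M).val with hgdef
  set e := g.factorization p with hedef
  set f := g.factorization q with hfdef
  have hg0 : g ≠ 0 := fun h0 => hcp (by rw [h0]; exact dvd_zero _)
  have hpe : p ^ e ∣ g := Nat.ordProj_dvd g p
  have hpe' : ¬ p ^ (e + 1) ∣ g := Nat.pow_succ_factorization_not_dvd hg0 hp
  have hqf : q ^ f ∣ g := Nat.ordProj_dvd g q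
  have hqf' : ¬ q ^ (f + 1) ∣ g := Nat.pow_succ_factorization_not_dvd hg0 hq
  have he1 : e + 1 ≤ np' := by
    by_contra hh
    push_neg at hh
    exact hcp ((pow_dvd_pow p (by omega)).trans hpe)
  have hf1 : f + 1 ≤ nq' := by
    by_contra hh
    push_neg at hh
    exact hcq ((pow_dvd_pow q (by omega)).trans hqf)
  have hcopq : Nat.Coprime p q := (Nat.coprime_primes hp hq).mpr hpq
  obtain ⟨h₀, hgh⟩ : ∃ h0, g = p ^ e * q ^ f * h0 :=
    (Nat.Coprime.mul_dvd_of_dvd_of_dvd (hcopq.pow e f) hpe hqf)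
  have hph : ¬ p ∣ h₀ := by
    rintro ⟨h₀', rfl⟩
    exact hpe' (by rw [hgh]; exact ⟨q ^ f * h₀', by ring⟩)
  have hqh : ¬ q ∣ h₀ := by
    rintro ⟨h₀', rfl⟩
    exact hqf' (by rw [hgh]; exact ⟨p ^ e * h₀', by ring⟩)
  have hcoph : Nat.Coprime h₀ (p * q) :=
    Nat.Coprime.mul_right ((hp.coprime_iff_not_dvd).mpr hph).symm
      ((hq.coprime_iff_not_dvd).mpr hqh).symm
  obtain ⟨c, hc⟩ := hzz
  haveI : NeZero (p * q) := ⟨Nat.mul_ne_zero hp.pos.ne' hq.pos.ne'⟩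
  set j := (((h₀ : ZMod (p * q)))⁻¹ * ((c : ℕ) : ZMod (p * q))).val with hjdef
  have hjh : j * h₀ ≡ c [MOD p * q] := by
    have h1 : ((h₀ : ℕ) : ZMod (p * q)) * (((h₀ : ℕ) : ZMod (p * q)))⁻¹ = 1 :=
      ZMod.coe_mul_inv_eq_one h₀ hcoph
    have hcast : ((j * h₀ : ℕ) : ZMod (p * q)) = ((c : ℕ) : ZMod (p * q)) := by
      push_cast
      rw [hjdef, ZMod.natCast_val, ZMod.cast_id]
      calc ((h₀ : ℕ) : ZMod (p * q))⁻¹ * ((c : ℕ) : ZMod (p * q)) * ((h₀ : ℕ) : ZMod (p * q))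
          = (((h₀ : ℕ) : ZMod (p * q)) * (((h₀ : ℕ) : ZMod (p * q)))⁻¹) * ((c : ℕ) : ZMod (p * q)) := by
            ring
        _ = ((c : ℕ) : ZMod (p * q)) := by rw [h1, one_mul]
    exact (ZMod.natCast_eq_natCast_iff _ _ _).mp hcast
  set m' := p ^ (np' - e) * q ^ (nq' - f) * W with hm'def
  have hmg : m' * g = (p ^ np' * q ^ nq' * W) * h₀ := by
    have hpp : p ^ (np' - e) * p ^ e = p ^ np' := by rw [← pow_add]; congr 1; omega
    have hqq : q ^ (nq' - f) * q ^ f = q ^ nq' := by rw [← pow_add]; congr 1; omega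
    calc m' * g = (p ^ (np' - e) * p ^ e) * ((q ^ (nq' - f) * q ^ f)) * W * h₀ := by
          rw [hm'def, hgh]; ring
      _ = p ^ np' * q ^ nq' * W * h₀ := by rw [hpp, hqq]
  set k := 1 + j * m' with hkdef
  have hkM : Nat.Coprime k M := by
    have hrm' : ∀ r : ℕ, r.Prime → r ∣ M → r ∣ m' := by
      intro r hr hrM
      rw [hM] at hrM
      have hp1 : np' - e ≠ 0 := by omega
      have hq1 : nq' - f ≠ 0 := by omega
      have hrp : r ∣ p → r ∣ m' := by
        intro h3
        have hrp' : r = p := (Nat.prime_dvd_prime_iff_eq hr hp).mp h3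
        subst hrp'
        exact dvd_mul_of_dvd_left (dvd_mul_of_dvd_left (dvd_pow_self r hp1) _) _
      have hrq : r ∣ q → r ∣ m' := by
        intro h3
        have hrq' : r = q := (Nat.prime_dvd_prime_iff_eq hr hq).mp h3
        subst hrq'
        exact dvd_mul_of_dvd_left (dvd_mul_of_dvd_right (dvd_pow_self r hq1) _) _
      rcases (Nat.Prime.dvd_mul hr).mp hrM with h1 | h2
      · rcases (Nat.Prime.dvd_mul hr).mp h1 with h3 | h4
        · exact hrp h3
        · exact hrq h4
      · rcases (Nat.Prime.dvd_mul hr).mp h2 with h3 | h4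
        · rcases (Nat.Prime.dvd_mul hr).mp h3 with h5 | h6
          · exact hrp (hr.dvd_of_dvd_pow h5)
          · exact hrq (hr.dvd_of_dvd_pow h6)
        · exact dvd_mul_of_dvd_right h4 _
    by_contra hne
    rw [Nat.Coprime] at hne
    obtain ⟨r, hr, hrd⟩ := Nat.exists_prime_and_dvd hne
    have hrk : r ∣ k := hrd.trans (Nat.gcd_dvd_left _ _)
    have hrMd : r ∣ M := hrd.trans (Nat.gcd_dvd_right _ _)
    have hrm : r ∣ j * m' := Dvd.dvd.mul_left (hrm' r hr hrMd) j
    have hone : r ∣ 1 := by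
      have hsub := Nat.dvd_sub hrk hrm
      have h2 : k - j * m' = 1 := by omega
      rwa [h2] at hsub
    exact hr.not_dvd_one hone
  have hnat : (j * m') * g ≡ (p ^ np' * q ^ nq' * W) * c [MOD M] := by
    have h1 : (j * m') * g = (p ^ np' * q ^ nq' * W) * (j * h₀) := by
      calc (j * m') * g = j * (m' * g) := by ring
        _ = j * ((p ^ np' * q ^ nq' * W) * h₀) := by rw [hmg]
        _ = _ := by ring
    rw [h1]
    have h2 := Nat.ModEq.mul_left' (c := p ^ np' * q ^ nq' * W) hjh
    have h3 : (p ^ np' * q ^ nq' * W) * (p * q) = M := by rw [hM]; ring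
    rw [h3] at h2
    exact h2
  have hg_cast : ((g : ℕ) : ZMod M) = x₁ - x₂ := ZMod.natCast_rightInverse _
  have hδ_cast : (((p ^ np' * q ^ nq' * W) * c : ℕ) : ZMod M) = (x₂ + y₂) - (x₁ + y₁) := by
    rw [← hc]; exact ZMod.natCast_rightInverse _
  have hcol : ((k : ℕ) : ZMod M) * x₁ + y₁ = ((k : ℕ) : ZMod M) * x₂ + y₂ := by
    have h4 : ((j * m' : ℕ) : ZMod M) * (x₁ - x₂) = (x₂ + y₂) - (x₁ + y₁) := by
      rw [← hg_cast, ← Nat.cast_mul, (ZMod.natCast_eq_natCast_iff _ _ _).mpr hnat, hδ_cast]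
    have h5 : ((k : ℕ) : ZMod M) = 1 + ((j * m' : ℕ) : ZMod M) := by
      rw [hkdef]; push_cast; ring
    rw [h5]
    linear_combination h4
  obtain ⟨w, hw, hu⟩ := dilate h k hkM (((k : ℕ) : ZMod M) * x₁ + y₁)
  have e1 := hu (x₁, y₁) ⟨hx₁, hy₁, rfl⟩
  have e2 := hu (x₂, y₂) ⟨hx₂, hy₂, hcol.symm⟩
  have hx12 : x₁ = x₂ := congrArg Prod.fst (e1.trans e2.symm)
  apply hcp
  rw [hgdef, hx12, sub_self, ZMod.val_zero]
  exact dvd_zero _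

theorem stmt16 (M p q np nq : ℕ) [NeZero M] (hp : p.Prime) (hq : q.Prime) (hpq : p ≠ q)
    (hnp : 1 ≤ np) (hnq : 1 ≤ nq)
    (hpd : p ^ np ∣ M) (hpd' : ¬ p ^ (np + 1) ∣ M)
    (hqd : q ^ nq ∣ M) (hqd' : ¬ q ^ (nq + 1) ∣ M)
    (A B : Finset (ZMod M)) (h : IsTiling M A B)
    (z a b : ZMod M) (ha : a ∈ A) (hb : b ∈ B) (hab : a + b = z) :
    ∃ ℓ : ℕ, (ℓ = p ^ (np - 1) ∨ ℓ = q ^ (nq - 1)) ∧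
      (∀ a' ∈ SigmaSet M A B {z' : ZMod M | (M / (p * q)) ∣ ((z - z' : ZMod M)).val},
        ℓ ∣ ((a' - a : ZMod M)).val) ∧
      (∀ b' ∈ SigmaSet M B A {z' : ZMod M | (M / (p * q)) ∣ ((z - z' : ZMod M)).val},
        ℓ ∣ ((b' - b : ZMod M)).val) := by
  obtain ⟨np', rfl⟩ : ∃ n', np = n' + 1 := ⟨np - 1, (Nat.succ_pred_eq_of_pos hnp).symm⟩
  obtain ⟨nq', rfl⟩ : ∃ n', nq = n' + 1 := ⟨nq - 1, (Nat.succ_pred_eq_of_pos hnq).symm⟩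
  have hcopq : Nat.Coprime p q := (Nat.coprime_primes hp hq).mpr hpq
  obtain ⟨W, hW⟩ : ∃ W, M = p ^ (np' + 1) * q ^ (nq' + 1) * W := by
    obtain ⟨W, hW⟩ := (Nat.Coprime.mul_dvd_of_dvd_of_dvd (hcopq.pow _ _) hpd hqd)
    exact ⟨W, hW⟩
  have hM : M = p * q * (p ^ np' * q ^ nq' * W) := by rw [hW]; ring
  set D := p ^ np' * q ^ nq' * W with hD
  have hpq0 : 0 < p * q := Nat.mul_pos hp.pos hq.pos
  have hDeq : M / (p * q) = D := by
    rw [hM]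
    exact Nat.mul_div_cancel_left _ hpq0
  have hDM : D ∣ M := ⟨p * q, by rw [hM]; ring⟩
  have hpM : p ^ np' ∣ M := ⟨p * q * (q ^ nq' * W), by rw [hM]; ring⟩
  have hqM : q ^ nq' ∣ M := ⟨p * q * (p ^ np' * W), by rw [hM]; ring⟩
  have hpD : p ^ np' ∣ D := ⟨q ^ nq' * W, by rw [hD]; ring⟩
  have hqD : q ^ nq' ∣ D := ⟨p ^ np' * W, by rw [hD]; ring⟩
  simp only [Nat.add_sub_cancel, hDeq]
  -- specialized per-pair claim
  have PP : ∀ x y, x ∈ A → y ∈ B → ∀ u v, u ∈ A → v ∈ B →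
      D ∣ (((u + v) - (x + y) : ZMod M)).val →
      p ^ np' ∣ ((x - u : ZMod M)).val ∨ q ^ nq' ∣ ((x - u : ZMod M)).val :=
    fun x y hx hy u v hu hv hd => perpair hp hq hpq hM h hx hy hu hv hd
  -- difference juggling
  have hdiff : ∀ u v : ZMod M, D ∣ ((z - u : ZMod M)).val → D ∣ ((z - v : ZMod M)).val →
      D ∣ ((v - u : ZMod M)).val := by
    intro u v h1 h2
    rw [val_dvd_iff hDM] at h1 h2 ⊢
    have : (v - u : ZMod M) = (z - u) - (z - v) := by ring
    rw [this, map_sub, h1, h2, sub_zero]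
  by_cases HP : ∀ x ∈ A, ∀ y ∈ B, D ∣ ((z - (x + y) : ZMod M)).val →
      p ^ np' ∣ ((x - a : ZMod M)).val
  · refine ⟨p ^ np', Or.inl rfl, ?_, ?_⟩
    · rintro a' ⟨hA, b', hb', hmem⟩
      exact HP a' hA b' hb' hmem
    · rintro b' ⟨hB, a'', ha'', hmem⟩
      have hmem' : D ∣ ((z - (a'' + b') : ZMod M)).val := by
        rwa [add_comm a'' b']
      have h1 : p ^ np' ∣ ((a'' - a : ZMod M)).val := HP a'' ha'' b' hB hmem'
      rw [val_dvd_iff hpM] at h1 ⊢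
      have h2 : p ^ np' ∣ ((z - (a'' + b') : ZMod M)).val := hpD.trans hmem'
      rw [val_dvd_iff hpM] at h2
      have h3 : (b' - b : ZMod M) = (0 - (z - (a'' + b'))) - (a'' - a) := by
        rw [← hab]; ring
      rw [h3, map_sub, map_sub, map_zero, h1, h2, sub_zero, zero_sub, neg_zero]
  · push_neg at HP
    obtain ⟨u, hu, v, hv, huv, hnd⟩ := HP
    have HQ : ∀ x ∈ A, ∀ y ∈ B, D ∣ ((z - (x + y) : ZMod M)).val →
        q ^ nq' ∣ ((x - a : ZMod M)).val := by
      intro x hx y hy hz'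
      have hz'' : D ∣ (((a + b) - (x + y) : ZMod M)).val := by rwa [hab]
      rcases PP x y hx hy a b ha hb hz'' with hP | hQ
      · have hxu : D ∣ (((x + y) - (u + v) : ZMod M)).val := hdiff (u + v) (x + y) huv hz'
        rcases PP u v hu hv x y hx hy hxu with hP2 | hQ2
        · exfalso
          apply hnd
          rw [val_dvd_iff hpM] at hP2 hP ⊢
          have h4 : (u - a : ZMod M) = (u - x) + (x - a) := by ring
          rw [h4, map_add, hP2, hP, add_zero]
        · have hua : D ∣ (((a + b) - (u + v) : ZMod M)).val := by rwa [hab]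
          have hQ3 : q ^ nq' ∣ ((u - a : ZMod M)).val :=
            (PP u v hu hv a b ha hb hua).resolve_left hnd
          rw [val_dvd_iff hqM] at hQ2 hQ3 ⊢
          have h5 : (x - a : ZMod M) = (u - a) - (u - x) := by ring
          rw [h5, map_sub, hQ3, hQ2, sub_zero]
      · exact hQ
    refine ⟨q ^ nq', Or.inr rfl, ?_, ?_⟩
    · rintro a' ⟨hA, b', hb', hmem⟩
      exact HQ a' hA b' hb' hmem
    · rintro b' ⟨hB, a'', ha'', hmem⟩
      have hmem' : D ∣ ((z - (a'' + b') : ZMod M)).val := by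
        rwa [add_comm a'' b']
      have h1 : q ^ nq' ∣ ((a'' - a : ZMod M)).val := HQ a'' ha'' b' hB hmem'
      rw [val_dvd_iff hqM] at h1 ⊢
      have h2 : q ^ nq' ∣ ((z - (a'' + b') : ZMod M)).val := hqD.trans hmem'
      rw [val_dvd_iff hqM] at h2
      have h3 : (b' - b : ZMod M) = (0 - (z - (a'' + b'))) - (a'' - a) := by
        rw [← hab]; ring
      rw [h3, map_sub, map_sub, map_zero, h1, h2, sub_zero, zero_sub, neg_zero]
end

section
/- Let A ⊕ B = ℤ_M be a tiling, p, q distinct primes dividing M with p^{n_p} ‖ M, q^{n_q} ‖ M. Let Λ = Λ(z, M/(pq)) and suppose a_0 ∈ Σ_A(Λ) satisfies a_0 * F_p ⊆ A (i.e., a_0 + νM/p ∈ A for all ν = 0, …, p−1). Then Σ_A(Λ) ⊆ Π(a_0, q^{n_q − 1}), i.e., q^{n_q − 1} | a − a_0 for all a ∈ Σ_A(Λ). -/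
/- ### Auxiliary lemmas -/

lemma dvd_val_iff_cast_eq_zero (M d : ℕ) [NeZero M] (hd : d ∣ M) (x : ZMod M) :
    d ∣ x.val ↔ (ZMod.castHom hd (ZMod d)) x = 0 := by
  rw [ZMod.castHom_apply, ← ZMod.natCast_val, ZMod.natCast_eq_zero_iff]

lemma tiling_card (M : ℕ) [NeZero M] (A B : Finset (ZMod M)) (h : IsTiling M A B) :
    A.card * B.card = M := by
  have hbij : (A ×ˢ B).card = (Finset.univ : Finset (ZMod M)).card := by
    apply Finset.card_bij (fun ab _ => ab.1 + ab.2)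
    · intro a ha; exact Finset.mem_univ _
    · intro a1 h1 a2 h2 heq
      have m1 := Finset.mem_product.mp h1
      have m2 := Finset.mem_product.mp h2
      exact (h (a1.1 + a1.2)).unique ⟨m1.1, m1.2, rfl⟩ ⟨m2.1, m2.2, heq.symm⟩
    · intro z _
      obtain ⟨ab, ⟨h1, h2, h3⟩, -⟩ := h z
      exact ⟨ab, Finset.mem_product.mpr ⟨h1, h2⟩, h3⟩
  rw [← Finset.card_product, hbij, Finset.card_univ, ZMod.card]

section MaskAlgebra

open AddMonoidAlgebra

variable (r M : ℕ) [NeZero M]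

noncomputable def mask (C : Finset (ZMod M)) : AddMonoidAlgebra (ZMod r) (ZMod M) :=
  ∑ x ∈ C, AddMonoidAlgebra.single x 1

noncomputable def theta : AddMonoidAlgebra (ZMod r) (ZMod M) :=
  ∑ x : ZMod M, AddMonoidAlgebra.single x 1

lemma mask_mul_mask (C D : Finset (ZMod M)) :
    mask r M C * mask r M D
      = ∑ ab ∈ C ×ˢ D, AddMonoidAlgebra.single (ab.1 + ab.2) (1 : ZMod r) := by
  rw [mask, mask, Finset.sum_mul_sum, Finset.sum_product]
  simp [AddMonoidAlgebra.single_mul_single]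

lemma single_mul_theta (g : ZMod M) :
    AddMonoidAlgebra.single g (1 : ZMod r) * theta r M = theta r M := by
  rw [theta, Finset.mul_sum]
  exact Fintype.sum_bijective (fun z : ZMod M => g + z) (Equiv.addLeft g).bijective _ _
    (fun x => by rw [AddMonoidAlgebra.single_mul_single, one_mul])

lemma mask_mul_theta (C : Finset (ZMod M)) :
    mask r M C * theta r M = (C.card : ZMod r) • theta r M := by
  rw [mask, Finset.sum_mul]
  rw [Finset.sum_congr rfl (fun x _ => single_mul_theta r M x), Finset.sum_const,
    Nat.cast_smul_eq_nsmul]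

lemma mask_pow_mul_theta (C : Finset (ZMod M)) (n : ℕ) :
    mask r M C ^ n * theta r M = ((C.card : ZMod r) ^ n) • theta r M := by
  induction n with
  | zero => simp
  | succ n ih =>
    rw [pow_succ, mul_assoc, mask_mul_theta, mul_smul_comm, ih, smul_smul, ← pow_succ']

lemma tiling_mask_mul (A B : Finset (ZMod M)) (h : IsTiling M A B) :
    mask r M A * mask r M B = theta r M := by
  rw [mask_mul_mask, theta]
  apply Finset.sum_bij (fun ab _ => ab.1 + ab.2)
  · intro a ha; exact Finset.mem_univ _
  · intro a1 h1 a2 h2 heq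
    have m1 := Finset.mem_product.mp h1
    have m2 := Finset.mem_product.mp h2
    exact (h (a1.1 + a1.2)).unique ⟨m1.1, m1.2, rfl⟩ ⟨m2.1, m2.2, heq.symm⟩
  · intro z _
    obtain ⟨ab, ⟨h1, h2, h3⟩, -⟩ := h z
    exact ⟨ab, Finset.mem_product.mpr ⟨h1, h2⟩, h3⟩
  · intro a ha; rfl

lemma mask_pow_prime (hr : r.Prime) (C : Finset (ZMod M)) :
    mask r M C ^ r = ∑ x ∈ C, AddMonoidAlgebra.single ((r : ZMod M) * x) (1 : ZMod r) := by
  haveI : Fact r.Prime := ⟨hr⟩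
  haveI : CharP (AddMonoidAlgebra (ZMod r) (ZMod M)) r :=
    charP_of_injective_ringHom (f := AddMonoidAlgebra.singleZeroRingHom)
      (fun x y hxy => by
        have := congrArg (fun f : AddMonoidAlgebra (ZMod r) (ZMod M) => f.coeff 0) hxy
        simpa [AddMonoidAlgebra.singleZeroRingHom, Finsupp.single_apply] using this) r
  rw [mask, sum_pow_char]
  apply Finset.sum_congr rfl
  intro x _
  rw [AddMonoidAlgebra.single_pow, one_pow, nsmul_eq_mul]

theorem tiling_mul_prime (A B : Finset (ZMod M)) (h : IsTiling M A B)
    (hr : r.Prime) (hrM : ¬ r ∣ M) :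
    IsTiling M (A.image fun x => (r : ZMod M) * x) B := by
  haveI : Fact r.Prime := ⟨hr⟩
  haveI : Fact (1 < r) := ⟨hr.one_lt⟩
  set A' := A.image (fun x => (r : ZMod M) * x) with hA'
  have hcop : Nat.Coprime r M := (Nat.Prime.coprime_iff_not_dvd hr).mpr hrM
  have hunit : IsUnit (r : ZMod M) :=
    ⟨ZMod.unitOfCoprime r hcop, ZMod.coe_unitOfCoprime r hcop⟩
  have hinj : Function.Injective (fun x : ZMod M => (r : ZMod M) * x) :=
    fun x y hxy => hunit.mul_left_cancel hxy
  have hAcard : A'.card = A.card := Finset.card_image_of_injective _ hinj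
  have hABcard : A.card * B.card = M := tiling_card M A B h
  -- the mask identity
  have hmask : mask r M A' * mask r M B = theta r M := by
    have h1 : mask r M A' = mask r M A ^ r := by
      rw [mask_pow_prime r M hr A, mask, Finset.sum_image]
      intro x hx y hy hxy
      exact hinj hxy
    rw [h1]
    have key : ∀ x : AddMonoidAlgebra (ZMod r) (ZMod M), x ^ r = x ^ (r - 1) * x := by
      intro x
      rw [← pow_succ]
      congr 1
      have := hr.pos
      omega
    have hcard0 : (A.card : ZMod r) ≠ 0 := by
      rw [Ne, ZMod.natCast_eq_zero_iff]
      intro hdvd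
      exact hrM (hdvd.trans ⟨B.card, hABcard.symm⟩)
    rw [key, mul_assoc, tiling_mask_mul r M A B h, mask_pow_mul_theta,
      ZMod.pow_card_sub_one_eq_one hcard0, one_smul]
  -- coefficient extraction
  have hcong : ∀ y : ZMod M,
      ((((A' ×ˢ B).filter fun ab => ab.1 + ab.2 = y).card : ZMod r)) = 1 := by
    intro y
    have h2 : (mask r M A' * mask r M B).coeff y = (theta r M).coeff y := by rw [hmask]
    rw [mask_mul_mask, theta] at h2
    rw [AddMonoidAlgebra.coeff_sum, AddMonoidAlgebra.coeff_sum, Finsupp.finset_sum_apply, Finsupp.finset_sum_apply] at h2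
    simp only [AddMonoidAlgebra.coeff_single, Finsupp.single_apply] at h2
    rwa [Finset.sum_ite_eq' Finset.univ y (fun _ => (1 : ZMod r)),
      if_pos (Finset.mem_univ y), Finset.sum_boole] at h2
  have hge1 : ∀ y : ZMod M, 1 ≤ ((A' ×ˢ B).filter fun ab => ab.1 + ab.2 = y).card := by
    intro y
    rcases Nat.eq_zero_or_pos ((A' ×ˢ B).filter fun ab => ab.1 + ab.2 = y).card with h0 | h1
    · exfalso
      have := hcong y
      rw [h0] at this
      simp at this
    · exact h1
  have hsumN : ∑ y : ZMod M, ((A' ×ˢ B).filter fun ab => ab.1 + ab.2 = y).card = M := by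
    rw [← Finset.card_eq_sum_card_fiberwise (fun ab _ => Finset.mem_univ (ab.1 + ab.2)),
      Finset.card_product, hAcard, hABcard]
  have hN1 : ∀ y : ZMod M, ((A' ×ˢ B).filter fun ab => ab.1 + ab.2 = y).card = 1 := by
    intro y
    by_contra hne
    have h2 : 2 ≤ ((A' ×ˢ B).filter fun ab => ab.1 + ab.2 = y).card := by
      have := hge1 y; omega
    have hlt : ∑ y' : ZMod M, 1 < ∑ y' : ZMod M,
        ((A' ×ˢ B).filter fun ab => ab.1 + ab.2 = y').card :=
      Finset.sum_lt_sum (fun i _ => hge1 i) ⟨y, Finset.mem_univ y, by omega⟩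
    rw [hsumN, Finset.sum_const, Finset.card_univ, ZMod.card, smul_eq_mul, mul_one] at hlt
    exact lt_irrefl M hlt
  -- conclude
  intro x
  obtain ⟨ab, hab⟩ := Finset.card_eq_one.mp (hN1 x)
  have habmem : ab ∈ (A' ×ˢ B).filter fun ab => ab.1 + ab.2 = x := by
    rw [hab]; exact Finset.mem_singleton_self ab
  have h1 := Finset.mem_filter.mp habmem
  have h12 := Finset.mem_product.mp h1.1
  refine ⟨ab, ⟨h12.1, h12.2, h1.2⟩, ?_⟩
  intro ab' hab'
  have : ab' ∈ (A' ×ˢ B).filter fun ab => ab.1 + ab.2 = x :=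
    Finset.mem_filter.mpr ⟨Finset.mem_product.mpr ⟨hab'.1, hab'.2.1⟩, hab'.2.2⟩
  rw [hab] at this
  exact Finset.mem_singleton.mp this

end MaskAlgebra

theorem tiling_mul_coprime (M : ℕ) [NeZero M] (B : Finset (ZMod M)) :
    ∀ k : ℕ, 0 < k → Nat.Coprime k M → ∀ A : Finset (ZMod M), IsTiling M A B →
      IsTiling M (A.image fun x => (k : ZMod M) * x) B := by
  intro k
  induction k using Nat.strong_induction_on with
  | _ k ih =>
    intro hk hcop A hA
    by_cases hk1 : k = 1
    · subst hk1
      have hfun : (fun x : ZMod M => ((1 : ℕ) : ZMod M) * x) = id := by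
        funext x; simp
      rwa [hfun, Finset.image_id]
    · set r := k.minFac with hrdef
      have hrp : r.Prime := Nat.minFac_prime hk1
      have hrdvd : r ∣ k := Nat.minFac_dvd k
      set k' := k / r with hk'def
      have hk' : r * k' = k := Nat.mul_div_cancel' hrdvd
      have hk'pos : 0 < k' := by
        rcases Nat.eq_zero_or_pos k' with h0 | h1
        · exfalso; rw [h0, mul_zero] at hk'; omega
        · exact h1
      have hk'lt : k' < k := Nat.div_lt_self hk hrp.one_lt
      have hcop' : Nat.Coprime k' M :=
        Nat.Coprime.coprime_dvd_left (Nat.div_dvd_of_dvd hrdvd) hcop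
      have hrM : ¬ r ∣ M := by
        intro hdvd
        have h2 : r ∣ Nat.gcd k M := Nat.dvd_gcd hrdvd hdvd
        rw [Nat.Coprime] at hcop
        rw [hcop] at h2
        exact hrp.one_lt.ne' (Nat.dvd_one.mp h2)
      have hT1 := ih k' hk'lt hk'pos hcop' A hA
      have hT2 := tiling_mul_prime r M _ B hT1 hrp hrM
      have himg : ((A.image fun x => (k' : ZMod M) * x).image fun x => (r : ZMod M) * x)
          = A.image fun x => (k : ZMod M) * x := by
        rw [Finset.image_image]
        apply Finset.image_congr
        intro x _
        show (r : ZMod M) * ((k' : ZMod M) * x) = (k : ZMod M) * x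
        rw [← hk']
        push_cast
        ring
      rwa [himg] at hT2

theorem stmt17 (M p q np nq : ℕ) [NeZero M] (hp : p.Prime) (hq : q.Prime) (hpq : p ≠ q)
    (hnp : 1 ≤ np) (hnq : 1 ≤ nq)
    (hpd : p ^ np ∣ M) (hpd' : ¬ p ^ (np + 1) ∣ M)
    (hqd : q ^ nq ∣ M) (hqd' : ¬ q ^ (nq + 1) ∣ M)
    (A B : Finset (ZMod M)) (h : IsTiling M A B)
    (z a0 : ZMod M)
    (ha0 : a0 ∈ SigmaSet M A B {z' : ZMod M | (M / (p * q)) ∣ ((z - z' : ZMod M)).val})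
    (hfib : ∀ ν < p, a0 + ((ν * (M / p) : ℕ) : ZMod M) ∈ A) :
    ∀ a ∈ SigmaSet M A B {z' : ZMod M | (M / (p * q)) ∣ ((z - z' : ZMod M)).val},
      (q ^ (nq - 1) : ℕ) ∣ ((a - a0 : ZMod M)).val := by
  intro a ha
  obtain ⟨ha0A, b0, hb0B, ha0b0⟩ := ha0
  obtain ⟨haA, b, hbB, hab⟩ := ha
  haveI : Fact p.Prime := ⟨hp⟩
  haveI : Fact q.Prime := ⟨hq⟩
  haveI : NeZero p := ⟨hp.pos.ne'⟩
  haveI : NeZero q := ⟨hq.pos.ne'⟩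
  -- basic divisibility bookkeeping
  have hpM : p ∣ M := dvd_trans (dvd_pow_self p (by omega)) hpd
  have hqM : q ∣ M := dvd_trans (dvd_pow_self q (by omega)) hqd
  have hpqM : p * q ∣ M := Nat.Coprime.mul_dvd_of_dvd_of_dvd
    ((Nat.coprime_primes hp hq).mpr hpq) hpM hqM
  set D : ℕ := M / (p * q) with hDdef
  have hDmul : D * (p * q) = M := Nat.div_mul_cancel hpqM
  have hDM : D ∣ M := ⟨p * q, hDmul.symm⟩
  have hqp : q ^ nq ∣ M / p := by
    obtain ⟨s, hs⟩ := hpM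
    have hps : M / p = s := by rw [hs]; exact Nat.mul_div_cancel_left s hp.pos
    rw [hps]
    have hcop : Nat.Coprime p (q ^ nq) :=
      ((Nat.coprime_primes hp hq).mpr hpq).pow_right nq
    have h2 : q ^ nq ∣ p * s := by rw [← hs]; exact hqd
    exact Nat.Coprime.dvd_of_dvd_mul_left hcop.symm h2
  have hMp : M / p = D * q := by
    rw [← hDmul, show D * (p * q) = D * q * p by ring]
    exact Nat.mul_div_cancel _ hp.pos
  have hMq : M / q = D * p := by
    rw [← hDmul, show D * (p * q) = D * p * q by ring]
    exact Nat.mul_div_cancel _ hq.pos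
  have hDq : q ^ (nq - 1) ∣ D := by
    have h2 : q ^ (nq - 1) * q ∣ D * q := by
      rw [show q ^ (nq - 1) * q = q ^ nq by rw [← pow_succ]; congr 1; omega, ← hMp]
      exact hqp
    exact (Nat.mul_dvd_mul_iff_right hq.pos).mp h2
  have hdM : (q ^ (nq - 1) : ℕ) ∣ M := dvd_trans (pow_dvd_pow q (by omega)) hqd
  set d : ℕ := q ^ (nq - 1) with hddef
  let φ := ZMod.castHom hdM (ZMod d)
  -- grid membership yields: h0 := (a+b) - (a0+b0) has value divisible by D
  set h0 : ZMod M := (a + b) - (a0 + b0) with hh0def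
  have hDval : D ∣ h0.val := by
    rw [dvd_val_iff_cast_eq_zero M D hDM]
    have e1 : (ZMod.castHom hDM (ZMod D)) (z - (a0 + b0)) = 0 := by
      rw [← dvd_val_iff_cast_eq_zero M D hDM]; exact ha0b0
    have e2 : (ZMod.castHom hDM (ZMod D)) (z - (a + b)) = 0 := by
      rw [← dvd_val_iff_cast_eq_zero M D hDM]; exact hab
    have e3 : h0 = (z - (a0 + b0)) - (z - (a + b)) := by rw [hh0def]; ring
    rw [e3, map_sub, e1, e2, sub_zero]
  set s : ℕ := h0.val / D with hsdef
  have hsval : D * s = h0.val := Nat.mul_div_cancel' hDval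
  -- Bezout decomposition h0 = ν•(M/p) + μ•(M/q)
  have hq0p : (q : ZMod p) ≠ 0 := by
    rw [Ne, ZMod.natCast_eq_zero_iff]
    intro h2
    exact hpq ((Nat.prime_dvd_prime_iff_eq hp hq).mp h2)
  have hp0q : (p : ZMod q) ≠ 0 := by
    rw [Ne, ZMod.natCast_eq_zero_iff]
    intro h2
    exact hpq ((Nat.prime_dvd_prime_iff_eq hq hp).mp h2).symm
  set ν : ℕ := ((s : ZMod p) * (q : ZMod p)⁻¹).val with hνdef
  set μ : ℕ := ((s : ZMod q) * (p : ZMod q)⁻¹).val with hμdef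
  have hνp : ν < p := ZMod.val_lt _
  have hμq : μ < q := ZMod.val_lt _
  have hmodp : ν * q + μ * p ≡ s [MOD p] := by
    rw [← ZMod.natCast_eq_natCast_iff]
    push_cast
    rw [ZMod.natCast_self, mul_zero, add_zero, ZMod.natCast_rightInverse _,
      mul_assoc, inv_mul_cancel₀ hq0p, mul_one]
  have hmodq : ν * q + μ * p ≡ s [MOD q] := by
    rw [← ZMod.natCast_eq_natCast_iff]
    push_cast
    rw [ZMod.natCast_self, mul_zero, zero_add, ZMod.natCast_rightInverse _,
      mul_assoc, inv_mul_cancel₀ hp0q, mul_one]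
  have hmodpq : ν * q + μ * p ≡ s [MOD p * q] :=
    (Nat.modEq_and_modEq_iff_modEq_mul ((Nat.coprime_primes hp hq).mpr hpq)).mp
      ⟨hmodp, hmodq⟩
  have hcast : h0 = ((ν * (M / p) + μ * (M / q) : ℕ) : ZMod M) := by
    have e1 : h0 = ((h0.val : ℕ) : ZMod M) := (ZMod.natCast_rightInverse h0).symm
    have e2 : ν * (M / p) + μ * (M / q) = D * (ν * q + μ * p) := by
      rw [hMp, hMq]; ring
    have e3 : D * (ν * q + μ * p) ≡ D * s [MOD M] := by
      rw [← hDmul]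
      exact Nat.ModEq.mul_left' D hmodpq
    rw [e1, ← hsval, e2]
    exact (ZMod.natCast_eq_natCast_iff _ _ _).mpr e3.symm
  -- the core congruence
  have hcore : φ (b - b0) = 0 := by
    by_cases hcase : (q ^ (nq - 1) : ℕ) ∣ (a - a0 : ZMod M).val
    · -- direct case
      have hα : φ (a - a0) = 0 := by
        rw [← dvd_val_iff_cast_eq_zero M d hdM]; exact hcase
      have hφh : φ h0 = 0 := by
        rw [hcast, map_natCast, ZMod.natCast_eq_zero_iff]
        apply Nat.dvd_add
        · exact Dvd.dvd.mul_left (dvd_trans (pow_dvd_pow q (by omega)) hqp) ν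
        · rw [hMq]
          exact Dvd.dvd.mul_left (Dvd.dvd.mul_right hDq p) μ
      have e : b - b0 = h0 - (a - a0) := by rw [hh0def]; ring
      rw [e, map_sub, hφh, hα, sub_zero]
    · -- multiplier case: k·a + b = k·(a0 + ν(M/p)) + b0 forces b = b0
      set α : ZMod M := a - a0 with hαdef
      have hα0 : α.val ≠ 0 := by
        intro h2
        exact hcase (h2 ▸ Nat.dvd_zero d)
      set e : ℕ := (α.val).factorization q with hedef
      have he1 : q ^ e ∣ α.val := Nat.ordProj_dvd _ _
      have he2 : ¬ q ^ (e + 1) ∣ α.val := Nat.pow_succ_factorization_not_dvd hα0 hq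
      have heR : e < nq - 1 := by
        by_contra h2
        exact hcase (dvd_trans (pow_dvd_pow q (by omega)) he1)
      set g : ℕ := α.val / q ^ e with hgdef
      have hg : q ^ e * g = α.val := Nat.mul_div_cancel' he1
      have hqg : ¬ q ∣ g := by
        rintro ⟨c, hc⟩
        apply he2
        rw [← hg, hc, pow_succ]
        exact ⟨c, by ring⟩
      set m : ℕ := M / q ^ nq with hmdef
      have hQm : q ^ nq * m = M := Nat.mul_div_cancel' hqd
      have hg0 : (g : ZMod q) ≠ 0 := by
        rw [Ne, ZMod.natCast_eq_zero_iff]; exact hqg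
      set dco : ℕ := (-(μ : ZMod q) * (g : ZMod q)⁻¹).val with hdcodef
      have hkeyq : q ∣ dco * g + μ := by
        rw [← ZMod.natCast_eq_zero_iff]
        push_cast
        rw [ZMod.natCast_rightInverse _, mul_assoc, inv_mul_cancel₀ hg0, mul_one]
        ring
      set t : ℕ := m * q ^ (nq - 1 - e) * dco with htdef
      set k : ℕ := 1 + t with hkdef
      have hqt : q ∣ t := by
        have h2 : q ∣ q ^ (nq - 1 - e) := dvd_pow_self q (by omega)
        exact Dvd.dvd.mul_right (Dvd.dvd.mul_left h2 m) dco
      have hmt : m ∣ t := ⟨q ^ (nq - 1 - e) * dco, by ring⟩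
      have hcop : Nat.Coprime k M := by
        rw [Nat.Coprime]
        by_contra hne
        have hgcdpos : 0 < Nat.gcd k M := Nat.gcd_pos_of_pos_left M (by omega)
        have hwprime : (Nat.gcd k M).minFac.Prime := Nat.minFac_prime hne
        set rp := (Nat.gcd k M).minFac with hrpdef
        have hrk : rp ∣ k := dvd_trans (Nat.minFac_dvd _) (Nat.gcd_dvd_left _ _)
        have hrM : rp ∣ M := dvd_trans (Nat.minFac_dvd _) (Nat.gcd_dvd_right _ _)
        have hrt : rp ∣ t := by
          by_cases hrq : rp = q
          · rw [hrq]; exact hqt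
          · have h2 : rp ∣ q ^ nq * m := hQm ▸ hrM
            rcases (Nat.Prime.dvd_mul hwprime).mp h2 with h3 | h3
            · exact absurd ((Nat.prime_dvd_prime_iff_eq hwprime hq).mp
                (hwprime.dvd_of_dvd_pow h3)) hrq
            · exact dvd_trans h3 hmt
        have h4 : rp ∣ 1 := by
          have h5 := Nat.dvd_sub hrk hrt
          rwa [hkdef, Nat.add_sub_cancel] at h5
        exact hwprime.one_lt.ne' (Nat.dvd_one.mp h4)
      -- ZMod M identities
      have hαcast : ((α.val : ℕ) : ZMod M) = α := ZMod.natCast_rightInverse α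
      have hq1 : q ^ (nq - 1) * q = q ^ nq := by rw [← pow_succ]; congr 1; omega
      have hpow : q ^ (nq - 1 - e) * q ^ e = q ^ (nq - 1) := by
        rw [← pow_add]; congr 1; omega
      have hMq3 : M / q = q ^ (nq - 1) * m := by
        rw [← hQm, ← hq1, show q ^ (nq - 1) * q * m = q ^ (nq - 1) * m * q by ring]
        exact Nat.mul_div_cancel _ hq.pos
      set Y : ZMod M := ((μ * (M / q) : ℕ) : ZMod M) with hYdef
      set X : ZMod M := ((ν * (M / p) : ℕ) : ZMod M) with hXdef
      have hF2 : (t : ZMod M) * α = -Y := by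
        have h1 : t * α.val = m * (q ^ (nq - 1 - e) * q ^ e) * (dco * g) := by
          rw [← hg]; ring
        rw [hpow] at h1
        rw [← hαcast, ← Nat.cast_mul, hYdef, eq_neg_iff_add_eq_zero, ← Nat.cast_add,
          ZMod.natCast_eq_zero_iff]
        rw [h1, hMq3]
        have h2 : m * q ^ (nq - 1) * (dco * g) + μ * (q ^ (nq - 1) * m)
            = (q ^ (nq - 1) * m) * (dco * g + μ) := by ring
        rw [h2, ← hQm, ← hq1, show q ^ (nq - 1) * q * m = (q ^ (nq - 1) * m) * q by ring]
        exact Nat.mul_dvd_mul_left _ hkeyq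
      have hF3 : (t : ZMod M) * X = 0 := by
        have hpm : p ∣ m := by
          have h2 : p ^ np ∣ q ^ nq * m := hQm ▸ hpd
          have hcop2 : Nat.Coprime (p ^ np) (q ^ nq) :=
            Nat.Coprime.pow _ _ (((Nat.coprime_primes hp hq)).mpr hpq)
          exact dvd_trans (dvd_pow_self p (by omega))
            (Nat.Coprime.dvd_of_dvd_mul_left hcop2 h2)
        obtain ⟨m2, hm2⟩ := hpm
        rw [hXdef, ← Nat.cast_mul, ZMod.natCast_eq_zero_iff]
        refine ⟨m2 * q ^ (nq - 1 - e) * dco * ν, ?_⟩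
        have hstep : t * (ν * (M / p)) = p * (M / p) * (m2 * q ^ (nq - 1 - e) * dco * ν) := by
          rw [htdef, hm2]; ring
        rw [hstep, Nat.mul_div_cancel' hpM]
      have hkcast : ((k : ℕ) : ZMod M) = 1 + (t : ZMod M) := by
        rw [hkdef]; push_cast; ring
      have hh2 : a + b = a0 + b0 + X + Y := by
        have h2 : h0 = X + Y := by rw [hcast, Nat.cast_add]
        rw [hh0def] at h2
        linear_combination h2
      have hsum : ((k : ℕ) : ZMod M) * a + b = ((k : ℕ) : ZMod M) * (a0 + X) + b0 := by
        rw [hkcast]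
        have hF2' : (t : ZMod M) * (a - a0) = -Y := hF2
        linear_combination hh2 + hF2' - hF3
      -- apply the multiplied tiling
      have hkpos : 0 < k := by omega
      have hT' := tiling_mul_coprime M B k hkpos hcop A h
      have hmem1 : ((k : ℕ) : ZMod M) * a ∈ A.image fun x => ((k : ℕ) : ZMod M) * x :=
        Finset.mem_image_of_mem _ haA
      have hmem2 : ((k : ℕ) : ZMod M) * (a0 + X) ∈ A.image fun x => ((k : ℕ) : ZMod M) * x :=
        Finset.mem_image_of_mem _ (hfib ν hνp)
      obtain ⟨abst, -, huniq⟩ := hT' (((k : ℕ) : ZMod M) * a + b)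
      have e1 : (((k : ℕ) : ZMod M) * a, b) = abst :=
        huniq ((((k : ℕ) : ZMod M) * a, b)) ⟨hmem1, hbB, rfl⟩
      have e2 : (((k : ℕ) : ZMod M) * (a0 + X), b0) = abst :=
        huniq ((((k : ℕ) : ZMod M) * (a0 + X), b0)) ⟨hmem2, hb0B, hsum.symm⟩
      have hbb0 : b = b0 := congrArg Prod.snd (e1.trans e2.symm)
      rw [hbb0, sub_self, map_zero]
  -- assemble
  have h1 : φ (z - (a0 + b0)) = 0 := by
    rw [← dvd_val_iff_cast_eq_zero M d hdM]
    exact dvd_trans hDq ha0b0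
  have h2 : φ (z - (a + b)) = 0 := by
    rw [← dvd_val_iff_cast_eq_zero M d hdM]
    exact dvd_trans hDq hab
  have h3 : φ (a - a0) = 0 := by
    have e : (a - a0 : ZMod M) = ((z - (a0 + b0)) - (z - (a + b))) - (b - b0) := by ring
    rw [e]
    simp only [map_sub] at h1 h2 hcore ⊢
    linear_combination h1 - h2 - hcore
  rw [dvd_val_iff_cast_eq_zero M d hdM]
  exact h3
end

section
/- Let A ⊕ B = ℤ_M be a tiling and p a prime with p^n ‖ M. Assume that for every a ∈ A there exists a' ∈ A with gcd(a − a', M) = M/p (i.e., 𝔸_{M/p}[a] > 0 for all a ∈ A). Then in every tiling A ⊕ rB = ℤ_M with gcd(r, M) = 1, every fiber in the p direction splits with parity (rB, A). -/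
namespace Stmt19Aux

variable {M : ℕ} [NeZero M]

lemma filter_card_one {A B : Finset (ZMod M)} (h : IsTiling M A B) (z : ZMod M) :
    ((A ×ˢ B).filter (fun ab => ab.1 + ab.2 = z)).card = 1 := by
  obtain ⟨ab, ⟨h1, h2, h3⟩, hu⟩ := h z
  rw [Finset.card_eq_one]
  refine ⟨ab, ?_⟩
  ext x
  simp only [Finset.mem_filter, Finset.mem_product, Finset.mem_singleton]
  constructor
  · rintro ⟨⟨hx1, hx2⟩, hx3⟩; exact hu x ⟨hx1, hx2, hx3⟩
  · rintro rfl; exact ⟨⟨h1, h2⟩, h3⟩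

lemma card_mul {A B : Finset (ZMod M)} (h : IsTiling M A B) :
    A.card * B.card = M := by
  have key := Finset.card_eq_sum_card_fiberwise
    (f := fun ab : ZMod M × ZMod M => ab.1 + ab.2) (s := A ×ˢ B) (t := Finset.univ)
    (fun x _ => Finset.mem_univ _)
  rw [Finset.card_product] at key
  simp only [filter_card_one h] at key
  simpa [ZMod.card M] using key

variable {q : ℕ} [NeZero q]

/-- tuples (a, f) with a ∈ A, f : ZMod q → B, a + ∑ f = z -/
abbrev TT (A B : Finset (ZMod M)) (q : ℕ) [NeZero q] (z : ZMod M) : Type :=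
  {x : ZMod M × (ZMod q → ZMod M) // x.1 ∈ A ∧ (∀ i, x.2 i ∈ B) ∧ x.1 + ∑ i, x.2 i = z}

omit [NeZero M] in
lemma sum_shift (f : ZMod q → ZMod M) (g : ZMod q) : ∑ i, f (i + g) = ∑ i, f i :=
  Fintype.sum_equiv (Equiv.addRight g) _ _ (fun i => rfl)

instance ttAction (A B : Finset (ZMod M)) (z : ZMod M) :
    MulAction (Multiplicative (ZMod q)) (TT A B q z) where
  smul g x := ⟨(x.1.1, fun i => x.1.2 (i + g.toAdd)),
    x.2.1, fun i => x.2.2.1 _, by rw [sum_shift]; exact x.2.2.2⟩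
  one_smul x := by
    apply Subtype.ext
    refine Prod.ext rfl ?_
    funext i
    show x.1.2 (i + (1 : Multiplicative (ZMod q)).toAdd) = x.1.2 i
    simp
  mul_smul g g' x := by
    apply Subtype.ext
    refine Prod.ext rfl ?_
    funext i
    show x.1.2 (i + (g * g').toAdd) = x.1.2 ((i + g.toAdd) + g'.toAdd)
    rw [toAdd_mul]
    ring_nf

omit [NeZero M] in
lemma sum_split (f : ZMod q → ZMod M) :
    ∑ i, f i = f 0 + ∑ i : {i : ZMod q // i ≠ 0}, f i.1 := by
  rw [← Finset.add_sum_erase Finset.univ f (Finset.mem_univ 0)]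
  congr 1
  rw [← Finset.sum_subtype (p := fun i : ZMod q => i ≠ 0)]
  intro i; simp

lemma card_TT {A B : Finset (ZMod M)} (h : IsTiling M A B) (z : ZMod M) :
    Nat.card (TT A B q z) = B.card ^ (q - 1) := by
  classical
  have hbij : Function.Bijective (fun x : TT A B q z =>
      fun i : {i : ZMod q // i ≠ 0} => (⟨x.1.2 i.1, x.2.2.1 i.1⟩ : B)) := by
    constructor
    · rintro x y hxy
      have htail : ∀ i : {i : ZMod q // i ≠ 0}, x.1.2 i.1 = y.1.2 i.1 := by
        intro i
        have := congrFun hxy i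
        exact Subtype.ext_iff.mp this
      have hx3 := x.2.2.2
      have hy3 := y.2.2.2
      rw [sum_split] at hx3 hy3
      have hsum : ∑ i : {i : ZMod q // i ≠ 0}, x.1.2 i.1
          = ∑ i : {i : ZMod q // i ≠ 0}, y.1.2 i.1 :=
        Finset.sum_congr rfl (fun i _ => htail i)
      rw [hsum] at hx3
      have hxw : x.1.1 + x.1.2 0 = z - ∑ i : {i : ZMod q // i ≠ 0}, y.1.2 i.1 := by
        linear_combination hx3
      have hyw : y.1.1 + y.1.2 0 = z - ∑ i : {i : ZMod q // i ≠ 0}, y.1.2 i.1 := by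
        linear_combination hy3
      have hpair : (x.1.1, x.1.2 0) = (y.1.1, y.1.2 0) :=
        (h _).unique ⟨x.2.1, x.2.2.1 0, hxw⟩ ⟨y.2.1, y.2.2.1 0, hyw⟩
      obtain ⟨hp1, hp2⟩ := Prod.ext_iff.mp hpair
      apply Subtype.ext
      refine Prod.ext_iff.mpr ⟨hp1, ?_⟩
      funext i
      by_cases hi : i = 0
      · subst hi; exact hp2
      · exact htail ⟨i, hi⟩
    · intro g
      obtain ⟨ab, ⟨ha, hb, hab⟩, -⟩ := h (z - ∑ i : {i : ZMod q // i ≠ 0}, (g i : ZMod M))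
      refine ⟨⟨(ab.1, fun i => if hi : i = 0 then ab.2 else (g ⟨i, hi⟩ : ZMod M)),
        ha, ?_, ?_⟩, ?_⟩
      · intro i
        by_cases hi : i = 0 <;> simp [hi, hb, Finset.coe_mem]
      · dsimp only
        rw [sum_split, dif_pos (rfl : (0 : ZMod q) = 0)]
        have : ∑ i : {i : ZMod q // i ≠ 0},
            (if hi : i.1 = 0 then ab.2 else (g ⟨i.1, hi⟩ : ZMod M))
            = ∑ i : {i : ZMod q // i ≠ 0}, (g i : ZMod M) := by
          refine Finset.sum_congr rfl (fun i _ => ?_)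
          rw [dif_neg i.2]
        rw [this, ← add_assoc, hab]
        ring
      · funext i
        apply Subtype.ext
        show (if hi : i.1 = 0 then ab.2 else (g ⟨i.1, hi⟩ : ZMod M)) = (g i : ZMod M)
        rw [dif_neg i.2]
  rw [Nat.card_congr (Equiv.ofBijective _ hbij), Nat.card_eq_fintype_card,
    Fintype.card_fun, Fintype.card_coe]
  congr 1
  have : Fintype.card {i : ZMod q // i ≠ 0} = Fintype.card {i : ZMod q // ¬ i = 0} := rfl
  rw [this, Fintype.card_subtype_compl, Fintype.card_subtype_eq, ZMod.card]

open MulAction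

lemma fixed_const {A B : Finset (ZMod M)} {q : ℕ} [NeZero q] {z : ZMod M}
    (x : TT A B q z) (hx : x ∈ fixedPoints (Multiplicative (ZMod q)) (TT A B q z)) :
    ∀ i, x.1.2 i = x.1.2 0 := by
  intro i
  have h1 := mem_fixedPoints.mp hx (Multiplicative.ofAdd i)
  have h2 := congrArg (fun y : TT A B q z => y.1.2 0) h1
  have h3 : x.1.2 (0 + (Multiplicative.ofAdd i).toAdd) = x.1.2 0 := h2
  simpa using h3

lemma card_fixed {A B : Finset (ZMod M)} (q : ℕ) [NeZero q] (z : ZMod M) :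
    Nat.card (fixedPoints (Multiplicative (ZMod q)) (TT A B q z))
      = Nat.card {ab : ZMod M × ZMod M //
          ab.1 ∈ A ∧ ab.2 ∈ B ∧ ab.1 + (q : ZMod M) * ab.2 = z} := by
  apply Nat.card_congr
  have sum_const_eq : ∀ b : ZMod M, ∑ _i : ZMod q, b = (q : ZMod M) * b := by
    intro b
    rw [Finset.sum_const, Finset.card_univ, ZMod.card, nsmul_eq_mul]
  refine
    { toFun := fun x => ⟨(x.1.1.1, x.1.1.2 0), x.1.2.1, x.1.2.2.1 0, ?_⟩
      invFun := fun ab => ⟨⟨(ab.1.1, fun _ => ab.1.2), ab.2.1, fun _ => ab.2.2.1, ?_⟩, ?_⟩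
      left_inv := ?_
      right_inv := ?_ }
  · have h3 := x.1.2.2.2
    have : ∑ i, x.1.1.2 i = (q : ZMod M) * x.1.1.2 0 := by
      rw [← sum_const_eq (x.1.1.2 0)]
      exact Finset.sum_congr rfl (fun i _ => fixed_const x.1 x.2 i)
    rw [← this]
    exact h3
  · rw [sum_const_eq]
    exact ab.2.2.2
  · intro g
    apply Subtype.ext
    show ((ab.1.1, fun _ => ab.1.2) : ZMod M × (ZMod q → ZMod M)) = _
    rfl
  · intro x
    apply Subtype.ext
    apply Subtype.ext
    refine Prod.ext_iff.mpr ⟨rfl, ?_⟩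
    funext i
    exact (fixed_const x.1 x.2 i).symm
  · intro ab
    rfl

lemma count_pairs_q {A B : Finset (ZMod M)} (h : IsTiling M A B) (q : ℕ)
    [hqf : Fact q.Prime] (hq : ¬ q ∣ M) (z : ZMod M) :
    Nat.card {ab : ZMod M × ZMod M //
        ab.1 ∈ A ∧ ab.2 ∈ B ∧ ab.1 + (q : ZMod M) * ab.2 = z} ≡ 1 [MOD q] := by
  haveI : NeZero q := ⟨hqf.out.ne_zero⟩
  have pg : IsPGroup q (Multiplicative (ZMod q)) :=
    IsPGroup.of_card (n := 1) (by rw [Nat.card_eq_fintype_card]; simp [ZMod.card])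
  have h1 := pg.card_modEq_card_fixedPoints (TT A B q z)
  rw [card_TT h z, card_fixed q z] at h1
  have hBq : ¬ q ∣ B.card := by
    intro hd
    exact hq (card_mul h ▸ hd.mul_left A.card)
  have hB0 : (B.card : ZMod q) ≠ 0 := by
    rw [Ne, ZMod.natCast_eq_zero_iff]
    exact hBq
  have hferm : (B.card : ℕ) ^ (q - 1) ≡ 1 [MOD q] := by
    have := ZMod.pow_card_sub_one_eq_one hB0
    rw [← ZMod.natCast_eq_natCast_iff]
    push_cast
    exact this
  exact h1.symm.trans hferm

lemma tiling_step {A B : Finset (ZMod M)} (h : IsTiling M A B) (q : ℕ)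
    (hqp : q.Prime) (hq : ¬ q ∣ M) :
    IsTiling M A (B.image (fun b => (q : ZMod M) * b)) := by
  classical
  haveI : Fact q.Prime := ⟨hqp⟩
  set N : ZMod M → ℕ := fun z =>
    ((A ×ˢ B).filter (fun ab => ab.1 + (q : ZMod M) * ab.2 = z)).card with hN
  have hNcard : ∀ z, N z = Nat.card {ab : ZMod M × ZMod M //
      ab.1 ∈ A ∧ ab.2 ∈ B ∧ ab.1 + (q : ZMod M) * ab.2 = z} := by
    intro z
    rw [Nat.card_eq_fintype_card, Fintype.card_subtype]
    have : Finset.filter (fun ab : ZMod M × ZMod M =>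
        ab.1 ∈ A ∧ ab.2 ∈ B ∧ ab.1 + (q : ZMod M) * ab.2 = z) Finset.univ
        = (A ×ˢ B).filter (fun ab => ab.1 + (q : ZMod M) * ab.2 = z) := by
      ext ab
      simp [Finset.mem_product, and_assoc]
    rw [this]
  have hmod : ∀ z, N z ≡ 1 [MOD q] := by
    intro z; rw [hNcard z]; exact count_pairs_q h q hq z
  have hsum : ∑ z : ZMod M, N z = M := by
    have key := Finset.card_eq_sum_card_fiberwise
      (f := fun ab : ZMod M × ZMod M => ab.1 + (q : ZMod M) * ab.2)
      (s := A ×ˢ B) (t := Finset.univ) (fun x _ => Finset.mem_univ _)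
    rw [Finset.card_product, card_mul h] at key
    exact key.symm
  have hge : ∀ z, 1 ≤ N z := by
    intro z
    rcases Nat.eq_zero_or_pos (N z) with h0 | h1
    · exfalso
      have hm := hmod z
      rw [h0] at hm
      have h1q : 1 % q = 1 := Nat.mod_eq_of_lt hqp.one_lt
      have h0q : (0 : ℕ) % q = 0 := Nat.zero_mod q
      have : (0 : ℕ) = 1 := by rw [← h0q, ← h1q]; exact hm
      omega
    · exact h1
  have hone : ∀ z, N z = 1 := by
    by_contra hc
    push_neg at hc
    obtain ⟨z₀, hz₀⟩ := hc
    have h2 : 1 < N z₀ := lt_of_le_of_ne (hge z₀) (Ne.symm hz₀)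
    have hlt := Finset.sum_lt_sum (s := Finset.univ) (f := fun _ : ZMod M => 1)
      (g := N) (fun i _ => hge i) ⟨z₀, Finset.mem_univ _, h2⟩
    rw [hsum, Finset.sum_const, Finset.card_univ, ZMod.card, smul_eq_mul, mul_one] at hlt
    omega
  intro z
  obtain ⟨ab, hab⟩ := Finset.card_eq_one.mp (hone z)
  have habm : ab ∈ (A ×ˢ B).filter (fun ab => ab.1 + (q : ZMod M) * ab.2 = z) := by
    rw [hab]; exact Finset.mem_singleton_self ab
  rw [Finset.mem_filter, Finset.mem_product] at habm
  refine ⟨(ab.1, (q : ZMod M) * ab.2), ⟨habm.1.1, Finset.mem_image_of_mem _ habm.1.2,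
    habm.2⟩, ?_⟩
  rintro ⟨y1, y2⟩ ⟨hy1, hy2, hy3⟩
  obtain ⟨b', hb', rfl⟩ := Finset.mem_image.mp hy2
  have hmemf : ((y1, b') : ZMod M × ZMod M) ∈
      (A ×ˢ B).filter (fun ab => ab.1 + (q : ZMod M) * ab.2 = z) := by
    rw [Finset.mem_filter, Finset.mem_product]
    exact ⟨⟨hy1, hb'⟩, hy3⟩
  rw [hab, Finset.mem_singleton] at hmemf
  rw [← hmemf]

lemma tiling_nat_mul {A B : Finset (ZMod M)} (h : IsTiling M A B) (hM : 1 < M) :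
    ∀ k : ℕ, Nat.Coprime k M → IsTiling M A (B.image (fun b => (k : ZMod M) * b)) := by
  intro k
  induction k using Nat.strong_induction_on with
  | _ k ih =>
    intro hk
    rcases Nat.lt_or_ge k 2 with hk2 | hk2
    · interval_cases k
      · exfalso
        have : Nat.gcd 0 M = M := Nat.gcd_zero_left M
        rw [Nat.Coprime, this] at hk
        omega
      · simpa using h
    · set q := k.minFac with hq
      have hqp : q.Prime := Nat.minFac_prime (by omega)
      have hqd : q ∣ k := Nat.minFac_dvd k
      set t := k / q with ht
      have hkt : q * t = k := Nat.mul_div_cancel' hqd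
      have htlt : t < k := by
        have hq2 : 2 ≤ q := hqp.two_le
        have ht0 : t ≠ 0 := by
          intro h0; rw [h0, mul_zero] at hkt; omega
        have ht1 : 1 ≤ t := Nat.pos_of_ne_zero ht0
        nlinarith [hkt, ht1, hq2]
      have htc : Nat.Coprime t M := Nat.Coprime.coprime_dvd_left ⟨q, by rw [← hkt]; ring⟩ hk
      have hqM : ¬ q ∣ M := by
        intro hd
        have hdg : q ∣ Nat.gcd k M := Nat.dvd_gcd hqd hd
        have : q ∣ 1 := hk ▸ hdg
        have := Nat.le_of_dvd one_pos this
        have := hqp.two_le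
        omega
      have hstep := tiling_step (ih t htlt htc) q hqp hqM
      rw [Finset.image_image] at hstep
      have : ((fun b => (q : ZMod M) * b) ∘ (fun b => (t : ZMod M) * b))
          = (fun b => (k : ZMod M) * b) := by
        funext b
        show (q : ZMod M) * ((t : ZMod M) * b) = _
        rw [← hkt]
        push_cast
        ring
      rwa [this] at hstep

lemma tiling_unit_mul {A B : Finset (ZMod M)} (h : IsTiling M A B) (hM : 1 < M)
    (u : ZMod M) (hu : Nat.Coprime u.val M) :
    IsTiling M A (B.image (fun b => u * b)) := by
  have := tiling_nat_mul h hM u.val hu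
  rwa [ZMod.natCast_zmod_val u] at this


lemma dvd_val_iff {g : ℕ} (hg : g ∣ M) (x : ZMod M) :
    g ∣ x.val ↔ ∃ y : ZMod M, x = (g : ZMod M) * y := by
  constructor
  · rintro ⟨k, hk⟩
    refine ⟨(k : ZMod M), ?_⟩
    rw [← Nat.cast_mul, ← hk, ZMod.natCast_zmod_val]
  · rintro ⟨y, rfl⟩
    have hre : (g : ZMod M) * y = ((g * y.val : ℕ) : ZMod M) := by
      rw [Nat.cast_mul, ZMod.natCast_zmod_val]
    rw [hre, ZMod.val_natCast]
    exact (Nat.dvd_mod_iff hg).mpr (Dvd.intro _ rfl)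

lemma gcd_extract {p : ℕ} (hp2 : 2 ≤ p) (hpM : p ∣ M) {x : ZMod M}
    (hx : Nat.gcd x.val M = M / p) :
    ∃ k, 0 < k ∧ k < p ∧ x = ((k * (M / p) : ℕ) : ZMod M) := by
  have hQM : (M / p) * p = M := Nat.div_mul_cancel hpM
  have hM0 : 0 < M := Nat.pos_of_ne_zero (NeZero.ne M)
  have hQ0 : 0 < M / p := by
    rcases Nat.eq_zero_or_pos (M / p) with h0 | h1
    · rw [h0, zero_mul] at hQM; omega
    · exact h1
  have hd : (M / p) ∣ x.val := hx ▸ Nat.gcd_dvd_left _ _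
  obtain ⟨k, hk⟩ := hd
  have hvlt : x.val < M := ZMod.val_lt x
  have hklt : k < p := by
    by_contra hcon
    push_neg at hcon
    have : (M / p) * p ≤ (M / p) * k := Nat.mul_le_mul_left _ hcon
    omega
  have hk0 : 0 < k := by
    rcases Nat.eq_zero_or_pos k with h0 | h1
    · exfalso
      rw [h0, mul_zero] at hk
      rw [hk, Nat.gcd_zero_left] at hx
      have h2 : (M / p) * 2 ≤ (M / p) * p := Nat.mul_le_mul_left _ hp2
      omega
    · exact h1
  refine ⟨k, hk0, hklt, ?_⟩
  rw [← ZMod.natCast_zmod_val x, hk, mul_comm]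

lemma neg_cast_H {p k : ℕ} (hpM : p ∣ M) (hkp : k ≤ p) :
    -(((k * (M / p) : ℕ)) : ZMod M) = (((p - k) * (M / p) : ℕ) : ZMod M) := by
  have key : ((k * (M / p) : ℕ) : ZMod M) + (((p - k) * (M / p) : ℕ) : ZMod M) = 0 := by
    rw [← Nat.cast_add, ← Nat.add_mul, Nat.add_sub_cancel' hkp, Nat.mul_div_cancel' hpM,
      ZMod.natCast_self]
  linear_combination -key

lemma H_sub {p ν ν' : ℕ} (hpM : p ∣ M) (hp0 : 0 < p) (hν : ν < p) (hν' : ν' < p) :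
    ∃ μ, μ < p ∧ ((ν * (M / p) : ℕ) : ZMod M) - ((ν' * (M / p) : ℕ) : ZMod M)
      = ((μ * (M / p) : ℕ) : ZMod M) := by
  refine ⟨(ν + (p - ν')) % p, Nat.mod_lt _ hp0, ?_⟩
  set μ := (ν + (p - ν')) % p with hμdef
  have hmod : (μ + ν') % p = ν % p :=
    calc (μ + ν') % p = (ν + (p - ν') + ν') % p := by rw [hμdef, Nat.mod_add_mod]
    _ = (ν + p) % p := by rw [Nat.add_assoc, Nat.sub_add_cancel (le_of_lt hν')]
    _ = ν % p := by rw [Nat.add_mod_right]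
  have h1 : μ + ν' ≡ ν [MOD p] := hmod
  have h2 := h1.mul_right' (c := M / p)
  rw [Nat.mul_div_cancel' hpM] at h2
  have hcast : (((μ + ν') * (M / p) : ℕ) : ZMod M) = ((ν * (M / p) : ℕ) : ZMod M) := by
    rw [ZMod.natCast_eq_natCast_iff]
    exact h2
  have hsplit : (((μ + ν') * (M / p) : ℕ) : ZMod M)
      = ((μ * (M / p) : ℕ) : ZMod M) + ((ν' * (M / p) : ℕ) : ZMod M) := by
    push_cast
    ring
  rw [← hcast, hsplit]
  ring

/-- The key CRT construction: given `D` with `p^n ∤ D`, `μ < p` and `0 < ν₁ < p`, there is a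
unit `ρ` and `ε ∈ {0,1}` with `(ρ+1)·D = (μ + ε·ν₁)·p^{n-1}·m` in `ZMod (p^n·m)`. -/
lemma key_rho {p n m : ℕ} (hp : p.Prime) (hn : 1 ≤ n) (hm : ¬ p ∣ m) (hm0 : 0 < m)
    (hMpn : M = p ^ n * m)
    {D : ℕ} (hD : ¬ p ^ n ∣ D) {μ ν₁ : ℕ} (hν₁ : 0 < ν₁) (hν₁p : ν₁ < p) :
    ∃ (ρ : ZMod M) (ε : ℕ), ε ≤ 1 ∧ IsUnit ρ ∧
      (ρ + 1) * (D : ZMod M) = (((μ + ε * ν₁) * (p ^ (n - 1) * m) : ℕ) : ZMod M) := by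
  have hp2 := hp.two_le
  have hD0 : D ≠ 0 := fun h0 => hD (h0 ▸ dvd_zero _)
  obtain ⟨v, e, hpe, hDe⟩ := Nat.exists_eq_pow_mul_and_not_dvd hD0 p hp.ne_one
  have hvn : v < n := by
    by_contra hcon
    push_neg at hcon
    exact hD (hDe ▸ Dvd.dvd.mul_right (pow_dvd_pow p hcon) e)
  have hnv1 : 1 ≤ n - v := by omega
  have hP1 : 1 < p ^ (n - v) := Nat.one_lt_pow (by omega) hp.one_lt
  haveI : NeZero (p ^ (n - v)) := ⟨by positivity⟩
  set E := ((e : ZMod (p ^ (n - v)))⁻¹).val with hEdef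
  have hco : Nat.Coprime e (p ^ (n - v)) :=
    ((Nat.Prime.coprime_iff_not_dvd hp).mpr hpe).symm.pow_right _
  have hE : e * E ≡ 1 [MOD p ^ (n - v)] := by
    have h1 : ((e * E : ℕ) : ZMod (p ^ (n - v))) = ((1 : ℕ) : ZMod (p ^ (n - v))) := by
      push_cast
      rw [hEdef, ZMod.natCast_zmod_val, ZMod.coe_mul_inv_eq_one e hco]
    exact (ZMod.natCast_eq_natCast_iff _ _ _).mp h1
  have hEp : e * E ≡ 1 [MOD p] := hE.of_dvd (dvd_pow_self p (by omega))
  have hpE : ¬ p ∣ E := by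
    intro hdvd
    have h0 : e * E ≡ 0 [MOD p] := Nat.modEq_zero_iff_dvd.mpr (hdvd.mul_left e)
    have h01 : (0 : ℕ) ≡ 1 [MOD p] := h0.symm.trans hEp
    have := (Nat.modEq_iff_dvd' (by omega)).mp h01
    simp at this
    omega
  have hchoice : ∃ ε ≤ 1, ¬ ((μ + ε * ν₁) * p ^ (n - 1 - v) * m * E ≡ 1 [MOD p]) := by
    rcases Nat.lt_or_ge (v + 1) n with hv | hv
    · refine ⟨0, by omega, ?_⟩
      intro hcon
      have hdvd : p ∣ (μ + 0 * ν₁) * p ^ (n - 1 - v) * m * E := by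
        have hd : p ∣ p ^ (n - 1 - v) := dvd_pow_self p (by omega)
        exact ((hd.mul_left _).mul_right _).mul_right _
      have h0 : (μ + 0 * ν₁) * p ^ (n - 1 - v) * m * E ≡ 0 [MOD p] :=
        Nat.modEq_zero_iff_dvd.mpr hdvd
      have h01 : (0 : ℕ) ≡ 1 [MOD p] := h0.symm.trans hcon
      have := (Nat.modEq_iff_dvd' (by omega)).mp h01
      simp at this
      omega
    · have hpow : n - 1 - v = 0 := by omega
      by_cases h0 : (μ + 0 * ν₁) * p ^ (n - 1 - v) * m * E ≡ 1 [MOD p]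
      · refine ⟨1, le_refl 1, ?_⟩
        intro h1
        rw [hpow] at h0 h1
        have e0 : (μ + 0 * ν₁) * p ^ 0 * m * E = μ * m * E := by ring
        have e1 : (μ + 1 * ν₁) * p ^ 0 * m * E = μ * m * E + ν₁ * m * E := by ring
        rw [e0] at h0
        rw [e1] at h1
        have hsum : μ * m * E + ν₁ * m * E ≡ μ * m * E + 0 [MOD p] := by
          simpa using h1.trans h0.symm
        have hz : ν₁ * m * E ≡ 0 [MOD p] := Nat.ModEq.add_left_cancel' _ hsum
        have hdv : p ∣ ν₁ * m * E := Nat.modEq_zero_iff_dvd.mp hz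
        rcases hp.dvd_mul.mp hdv with hdv2 | hdv2
        · rcases hp.dvd_mul.mp hdv2 with hdv3 | hdv3
          · have := Nat.eq_zero_of_dvd_of_lt hdv3 hν₁p
            omega
          · exact hm hdv3
        · exact hpE hdv2
      · exact ⟨0, by omega, h0⟩
  obtain ⟨ε, hε, hS1⟩ := hchoice
  set S := (μ + ε * ν₁) * p ^ (n - 1 - v) * m * E with hSdef
  set T := (μ + ε * ν₁) * (p ^ (n - 1) * m) with hTdef
  have hSD : S * D ≡ T [MOD p ^ n] := by
    have heq : S * D = T * (e * E) := by
      rw [hSdef, hTdef, hDe]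
      have hpp : p ^ (n - 1 - v) * p ^ v = p ^ (n - 1) := by
        rw [← pow_add]; congr 1; omega
      calc (μ + ε * ν₁) * p ^ (n - 1 - v) * m * E * (p ^ v * e)
          = (μ + ε * ν₁) * (p ^ (n - 1 - v) * p ^ v) * m * (e * E) := by ring
        _ = (μ + ε * ν₁) * p ^ (n - 1) * m * (e * E) := by rw [hpp]
        _ = (μ + ε * ν₁) * (p ^ (n - 1) * m) * (e * E) := by ring
    have h1 : T * (e * E) ≡ T * 1 [MOD T * p ^ (n - v)] := hE.mul_left' T
    have h2 : p ^ n ∣ T * p ^ (n - v) := by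
      refine ⟨(μ + ε * ν₁) * m * p ^ (n - 1 - v), ?_⟩
      rw [hTdef]
      have hpp2 : p ^ (n - 1) * p ^ (n - v) = p ^ n * p ^ (n - 1 - v) := by
        rw [← pow_add, ← pow_add]; congr 1; omega
      calc (μ + ε * ν₁) * (p ^ (n - 1) * m) * p ^ (n - v)
          = (μ + ε * ν₁) * m * (p ^ (n - 1) * p ^ (n - v)) := by ring
        _ = (μ + ε * ν₁) * m * (p ^ n * p ^ (n - 1 - v)) := by rw [hpp2]
        _ = p ^ n * ((μ + ε * ν₁) * m * p ^ (n - 1 - v)) := by ring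
    have h3 := h1.of_dvd h2
    rw [mul_one] at h3
    rw [heq]
    exact h3
  have hcop : Nat.Coprime (p ^ n) m := ((Nat.Prime.coprime_iff_not_dvd hp).mpr hm).pow_left n
  obtain ⟨R, hR1, hR2⟩ := Nat.chineseRemainder hcop S 0
  have hMpos : 0 < p ^ n * m := by positivity
  set R' := R + p ^ n * m with hR'def
  have hR'1 : 1 ≤ R' := by omega
  have hR'S : R' ≡ S [MOD p ^ n] := by
    have := hR1.add (Nat.modEq_zero_iff_dvd.mpr ⟨m, rfl⟩ : p ^ n * m ≡ 0 [MOD p ^ n])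
    simpa [hR'def] using this
  have hR'm : R' ≡ 0 [MOD m] := by
    have := hR2.add (Nat.modEq_zero_iff_dvd.mpr ⟨p ^ n, mul_comm _ _⟩ : p ^ n * m ≡ 0 [MOD m])
    simpa [hR'def] using this
  refine ⟨((R' - 1 : ℕ) : ZMod M), ε, hε, ?_, ?_⟩
  · rw [ZMod.isUnit_iff_coprime, hMpn]
    refine Nat.Coprime.mul_right ?_ ?_
    · refine ((Nat.Prime.coprime_iff_not_dvd hp).mpr ?_).symm.pow_right n
      intro hdvd
      have h1 : 1 ≡ R' [MOD p] := (Nat.modEq_iff_dvd' hR'1).mpr hdvd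
      have h2 : R' ≡ S [MOD p] := hR'S.of_dvd (dvd_pow_self p (by omega))
      exact hS1 (h1.trans h2).symm
    · have hmR' : m ∣ R' := Nat.modEq_zero_iff_dvd.mp hR'm
      have hgd : Nat.gcd (R' - 1) m ∣ 1 := by
        have hg1 : Nat.gcd (R' - 1) m ∣ R' - 1 := Nat.gcd_dvd_left _ _
        have hg2 : Nat.gcd (R' - 1) m ∣ R' := (Nat.gcd_dvd_right _ _).trans hmR'
        have := Nat.dvd_sub hg2 hg1
        rwa [Nat.sub_sub_self hR'1] at this
      exact Nat.dvd_one.mp hgd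
  · have hcast1 : ((R' - 1 : ℕ) : ZMod M) + 1 = ((R' : ℕ) : ZMod M) := by
      have hrr := Nat.sub_add_cancel hR'1
      calc ((R' - 1 : ℕ) : ZMod M) + 1 = (((R' - 1) + 1 : ℕ) : ZMod M) := by push_cast; ring
        _ = ((R' : ℕ) : ZMod M) := by rw [hrr]
    rw [hcast1, ← Nat.cast_mul, ZMod.natCast_eq_natCast_iff, hMpn,
      ← Nat.modEq_and_modEq_iff_modEq_mul hcop]
    constructor
    · exact (hR'S.mul_right D).trans hSD
    · have h1 : R' * D ≡ 0 * D [MOD m] := hR'm.mul_right D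
      rw [zero_mul] at h1
      have h2 : T ≡ 0 [MOD m] :=
        Nat.modEq_zero_iff_dvd.mpr ⟨(μ + ε * ν₁) * p ^ (n - 1), by rw [hTdef]; ring⟩
      exact h1.trans h2.symm


lemma core {M p n m : ℕ} [NeZero M] (hp : p.Prime) (hn : 1 ≤ n)
    (hMpn : M = p ^ n * m) (hpm : ¬ p ∣ m) (hm0 : 0 < m) (hM1 : 1 < M)
    {A B : Finset (ZMod M)} (h : IsTiling M A B)
    (hA : ∀ a ∈ A, ∃ a' ∈ A, Nat.gcd ((a - a' : ZMod M)).val M = M / p)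
    {r : ZMod M} (hr : IsUnit r)
    {b b' a a' : ZMod M} (hb : b ∈ B) (hb' : b' ∈ B) (ha : a ∈ A) (ha' : a' ∈ A)
    {z : ZMod M} (hz : r * b + a ∈ fiberSet M p z) (hz' : r * b' + a' ∈ fiberSet M p z) :
    (p ^ n : ℕ) ∣ ((r * b - r * b' : ZMod M)).val := by
  have hp2 := hp.two_le
  have hpM : p ∣ M := hMpn ▸ (dvd_pow_self p (by omega)).mul_right m
  have hpowsplit : p ^ n = p * p ^ (n - 1) := by
    conv_lhs => rw [show n = 1 + (n - 1) by omega]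
    rw [pow_add, pow_one]
  have hQ : M / p = p ^ (n - 1) * m := by
    have hMp : M = p * (p ^ (n - 1) * m) := by
      rw [hMpn, hpowsplit, mul_assoc]
    rw [hMp, Nat.mul_div_cancel_left _ hp.pos]
  by_contra hcon
  obtain ⟨ν, hν, hzeq⟩ := hz
  obtain ⟨ν', hν', hzeq'⟩ := hz'
  obtain ⟨μ, hμ, hμeq⟩ := H_sub (M := M) hpM hp.pos hν hν'
  have hdiff : (r * b + a) - (r * b' + a') = ((μ * (M / p) : ℕ) : ZMod M) := by
    rw [hzeq, hzeq', ← hμeq]; ring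
  obtain ⟨a₁, ha₁, hgcd⟩ := hA a ha
  obtain ⟨k, hk0, hkp, hkeq⟩ := gcd_extract hp2 hpM hgcd
  have ha₁eq : a₁ = a + (((p - k) * (M / p) : ℕ) : ZMod M) := by
    rw [← neg_cast_H hpM (le_of_lt hkp), ← hkeq]; ring
  set ν₁ := p - k with hν₁def
  have hν₁0 : 0 < ν₁ := by omega
  have hν₁p : ν₁ < p := by omega
  set d := r * b - r * b' with hddef
  set D := d.val with hDdef
  have hDd : (D : ZMod M) = d := ZMod.natCast_zmod_val d
  obtain ⟨ρ, ε, hε, hρu, hρeq⟩ :=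
    key_rho (μ := μ) hp hn hpm hm0 hMpn (D := D) hcon hν₁0 hν₁p
  rw [← hQ] at hρeq
  have hsplit : (((μ + ε * ν₁) * (M / p) : ℕ) : ZMod M)
      = ((μ * (M / p) : ℕ) : ZMod M) + ((ε * (ν₁ * (M / p)) : ℕ) : ZMod M) := by
    push_cast; ring
  rw [hsplit, hDd] at hρeq
  set a₂ := a + ((ε * (ν₁ * (M / p)) : ℕ) : ZMod M) with ha₂def
  have ha₂A : a₂ ∈ A := by
    interval_cases ε
    · simpa [ha₂def] using ha
    · rw [ha₂def]
      rw [ha₁eq] at ha₁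
      simpa [hν₁def] using ha₁
  have hkey : a' + (ρ * r) * b = a₂ + (ρ * r) * b' := by
    rw [ha₂def]
    linear_combination hρeq - hdiff - (ρ + 1) * hddef
  have hunit2 : IsUnit (ρ * r) := hρu.mul hr
  have hcop2 : Nat.Coprime ((ρ * r).val) M := by
    have := (ZMod.isUnit_iff_coprime (ρ * r).val M)
    rw [ZMod.natCast_zmod_val] at this
    exact this.mp hunit2
  have htil := tiling_unit_mul h hM1 (ρ * r) hcop2
  obtain ⟨pr, hpr, hpru⟩ := htil (a' + (ρ * r) * b)
  have h1 := hpru (a', (ρ * r) * b) ⟨ha', Finset.mem_image_of_mem _ hb, rfl⟩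
  have h2 := hpru (a₂, (ρ * r) * b') ⟨ha₂A, Finset.mem_image_of_mem _ hb', hkey.symm⟩
  have hpair := h1.trans h2.symm
  have hbb : (ρ * r) * b = (ρ * r) * b' := (Prod.ext_iff.mp hpair).2
  have hbeq : b = b' := hunit2.mul_left_cancel hbb
  apply hcon
  rw [hDdef, hddef, hbeq, sub_self, ZMod.val_zero]
  exact dvd_zero _


end Stmt19Aux

open Stmt19Aux in
theorem stmt19 (M p n : ℕ) [NeZero M] (hp : p.Prime) (hn : 1 ≤ n)
    (hpn : p ^ n ∣ M) (hpn' : ¬ p ^ (n + 1) ∣ M)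
    (A B : Finset (ZMod M)) (h : IsTiling M A B)
    (hA : ∀ a ∈ A, ∃ a' ∈ A, Nat.gcd ((a - a' : ZMod M)).val M = M / p) :
    ∀ r : ZMod M, Nat.gcd r.val M = 1 →
      ∀ z : ZMod M, SplitsParity M p n (B.image fun b => r * b) A (fiberSet M p z) := by
  intro r hrgcd z
  open Stmt19Aux in
  have hp2 := hp.two_le
  have hM0 : M ≠ 0 := NeZero.ne M
  obtain ⟨m, hMpn⟩ := id hpn
  have hm0 : 0 < m := by
    rcases Nat.eq_zero_or_pos m with h0 | h1
    · rw [h0, mul_zero] at hMpn; omega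
    · exact h1
  have hpm : ¬ p ∣ m := by
    rintro ⟨t, rfl⟩
    apply hpn'
    refine ⟨t, ?_⟩
    rw [hMpn, pow_succ]
    ring
  have hpowsplit : p ^ n = p * p ^ (n - 1) := by
    conv_lhs => rw [show n = 1 + (n - 1) by omega]
    rw [pow_add, pow_one]
  have hQ : M / p = p ^ (n - 1) * m := by
    have hMp : M = p * (p ^ (n - 1) * m) := by rw [hMpn, hpowsplit, mul_assoc]
    rw [hMp, Nat.mul_div_cancel_left _ hp.pos]
  have hpM : p ∣ M := hMpn ▸ (dvd_pow_self p (by omega)).mul_right m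
  have hM1 : 1 < M := by
    have h2n : 2 ≤ p ^ n := by
      calc 2 ≤ p := hp2
      _ = p ^ 1 := (pow_one p).symm
      _ ≤ p ^ n := Nat.pow_le_pow_right hp.pos hn
    have : p ^ n ≤ M := Nat.le_of_dvd (by omega) hpn
    omega
  have hrunit : IsUnit r := by
    have := (ZMod.isUnit_iff_coprime r.val M)
    rw [ZMod.natCast_zmod_val] at this
    exact this.mpr hrgcd
  have hpnM : (p ^ n : ℕ) ∣ M := hpn
  have hpn1M : (p ^ (n - 1) : ℕ) ∣ M := by
    refine ⟨p * m, ?_⟩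
    rw [hMpn, hpowsplit]; ring
  constructor
  · -- differences of Σ_{rB}(Z) are divisible by p^n
    rintro c ⟨hcB, a, haA, hcaZ⟩ c' ⟨hc'B, a', ha'A, hc'a'Z⟩
    obtain ⟨b, hb, rfl⟩ := Finset.mem_image.mp hcB
    obtain ⟨b', hb', rfl⟩ := Finset.mem_image.mp hc'B
    exact core hp hn hMpn hpm hm0 hM1 h hA hrunit hb hb' haA ha'A hcaZ hc'a'Z
  · -- differences of distinct elements of Σ_A(Z) are exactly divisible by p^(n-1)
    rintro a ⟨haA, c, hcB, hacZ⟩ a' ⟨ha'A, c', hc'B, ha'c'Z⟩ hne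
    obtain ⟨b, hb, rfl⟩ := Finset.mem_image.mp hcB
    obtain ⟨b', hb', rfl⟩ := Finset.mem_image.mp hc'B
    rw [add_comm a (r * b)] at hacZ
    rw [add_comm a' (r * b')] at ha'c'Z
    have hG1 := core hp hn hMpn hpm hm0 hM1 h hA hrunit hb hb' haA ha'A hacZ ha'c'Z
    obtain ⟨y, hy⟩ := (dvd_val_iff hpnM _).mp hG1
    obtain ⟨ν, hν, hzeq⟩ := hacZ
    obtain ⟨ν', hν', hzeq'⟩ := ha'c'Z
    obtain ⟨μ, hμ, hμeq⟩ := H_sub (M := M) hpM hp.pos hν hν'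
    have hdiff : (r * b + a) - (r * b' + a') = ((μ * (M / p) : ℕ) : ZMod M) := by
      rw [hzeq, hzeq', ← hμeq]; ring
    have hcast2 : ((μ * (M / p) : ℕ) : ZMod M)
        = ((p ^ (n - 1) : ℕ) : ZMod M) * ((μ * m : ℕ) : ZMod M) := by
      rw [hQ]; push_cast; ring
    have hcast3 : ((p ^ n : ℕ) : ZMod M) = ((p ^ (n - 1) : ℕ) : ZMod M) * (p : ZMod M) := by
      rw [hpowsplit]; push_cast; ring
    constructor
    · rw [dvd_val_iff hpn1M]
      refine ⟨((μ * m : ℕ) : ZMod M) - (p : ZMod M) * y, ?_⟩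
      linear_combination hdiff - hy + hcast2 - y * hcast3
    · intro hcon
      obtain ⟨w, hw⟩ := (dvd_val_iff hpnM _).mp hcon
      have hμQ : ((μ * (M / p) : ℕ) : ZMod M) = ((p ^ n : ℕ) : ZMod M) * (w + y) := by
        linear_combination hw + hy - hdiff
      have hdvd2 : (p ^ n : ℕ) ∣ ((μ * (M / p) : ℕ) : ZMod M).val :=
        (dvd_val_iff hpnM _).mpr ⟨w + y, hμQ⟩
      have hQpos : 0 < M / p := by
        rw [hQ]; positivity
      have hQM2 : p * (M / p) = M := Nat.mul_div_cancel' hpM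
      have hμQlt : μ * (M / p) < M := by nlinarith [hμ, hQpos, hQM2]
      rw [ZMod.val_natCast, Nat.mod_eq_of_lt hμQlt] at hdvd2
      have hre : μ * (M / p) = p ^ (n - 1) * (μ * m) := by rw [hQ]; ring
      rw [hre] at hdvd2
      obtain ⟨t, ht⟩ := hdvd2
      have hμm : μ * m = p * t := by
        apply Nat.eq_of_mul_eq_mul_left (show 0 < p ^ (n - 1) by positivity)
        rw [ht, hpowsplit]; ring
      rcases hp.dvd_mul.mp ⟨t, hμm⟩ with hd | hd
      · have hμ0 : μ = 0 := Nat.eq_zero_of_dvd_of_lt hd hμ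
        have hzero : r * b + a = r * b' + a' := by
          have hdd := hdiff
          rw [hμ0] at hdd
          simp only [Nat.zero_mul, Nat.cast_zero] at hdd
          linear_combination hdd
        have htil := tiling_unit_mul h hM1 r hrgcd
        obtain ⟨pr, hpr, hpru⟩ := htil (r * b + a)
        have h1 := hpru (a, r * b)
          ⟨haA, Finset.mem_image_of_mem _ hb, show a + r * b = r * b + a by ring⟩
        have h2 := hpru (a', r * b')
          ⟨ha'A, Finset.mem_image_of_mem _ hb',
            show a' + r * b' = r * b + a by linear_combination -hzero⟩
        exact hne ((Prod.ext_iff.mp (h1.trans h2.symm)).1)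
      · exact hpm hd
end
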